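/- arXiv:0803.0134 — 3 statements merged into one kernel-verified Lean document; each statement's English description precedes it below -/
import Mathlib

section
/- Let G be a connected graph with minimum degree at least 2 that is not an even cycle and in which no edge connects two vertices of degree at least 3, and let G' be obtained from G by subdividing one edge once. If G is an odd cycle then ν₂(G') = ν₂(G) + 2; otherwise ν₂(G') = ν₂(G) + 1. -/
structure Multigraph where
  V : Type
  E : Type
  fintypeV : Fintype V
  decEqV : DecidableEq V
  fintypeE : Fintype E
  decEqE : DecidableEq E
  ends : E → Sym2 V

attribute [instance] Multigraph.fintypeV Multigraph.decEqV Multigraph.fintypeE Multigraph.decEqE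

namespace Multigraph

/-- `e` is a loop if both of its endpoints coincide. -/
def IsLoop (G : Multigraph) (e : G.E) : Prop := (G.ends e).IsDiag

/-- A loopless multigraph. -/
def Loopless (G : Multigraph) : Prop := ∀ e, ¬ G.IsLoop e

/-- Degree of a vertex: loops count twice. -/
def deg (G : Multigraph) (v : G.V) : ℕ :=
  ∑ e : G.E, (if G.ends e = Sym2.diag v then 2 else if v ∈ G.ends e then 1 else 0)

/-- Adjacency via some edge. -/
def Adj (G : Multigraph) (u v : G.V) : Prop := ∃ e, G.ends e = s(u, v)

/-- Connectivity. -/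
def Connected (G : Multigraph) : Prop := ∀ u v : G.V, Relation.ReflTransGen G.Adj u v

/-- A matching: a set of non-loop edges no two of which share an endpoint. -/
def IsMatching (G : Multigraph) (M : Finset G.E) : Prop :=
  (∀ e ∈ M, ¬ G.IsLoop e) ∧
  ∀ e ∈ M, ∀ f ∈ M, e ≠ f → ∀ v : G.V, v ∈ G.ends e → v ∉ G.ends f

/-- A maximum matching. -/
def IsMaximumMatching (G : Multigraph) (M : Finset G.E) : Prop :=
  G.IsMatching M ∧ ∀ M' : Finset G.E, G.IsMatching M' → M'.card ≤ M.card

/-- `v` is saturated by `M`. -/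
def Saturated (G : Multigraph) (M : Finset G.E) (v : G.V) : Prop :=
  ∃ e ∈ M, v ∈ G.ends e

/-- Size of a maximum matching. -/
noncomputable def nu1 (G : Multigraph) : ℕ :=
  sSup {m | ∃ M : Finset G.E, G.IsMatching M ∧ M.card = m}

/-- Max number of edges coverable by two disjoint matchings. -/
noncomputable def nu2 (G : Multigraph) : ℕ :=
  sSup {m | ∃ H H' : Finset G.E, G.IsMatching H ∧ G.IsMatching H' ∧
    Disjoint H H' ∧ H.card + H'.card = m}

/-- Max number of edges coverable by three pairwise disjoint matchings. -/
noncomputable def nu3 (G : Multigraph) : ℕ :=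
  sSup {m | ∃ H₁ H₂ H₃ : Finset G.E, G.IsMatching H₁ ∧ G.IsMatching H₂ ∧ G.IsMatching H₃ ∧
    Disjoint H₁ H₂ ∧ Disjoint H₁ H₃ ∧ Disjoint H₂ H₃ ∧ H₁.card + H₂.card + H₃.card = m}

/-- Subdividing the edge `e`, with endpoints `u`, `v`, once: replace it by a path `u - w - v`
through a new vertex `w`. -/
def subdivideOnce (G : Multigraph) (e : G.E) (u v : G.V) : Multigraph where
  V := G.V ⊕ Unit
  E := {f : G.E // f ≠ e} ⊕ Bool
  fintypeV := inferInstance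
  decEqV := inferInstance
  fintypeE := inferInstance
  decEqE := inferInstance
  ends := fun f =>
    match f with
    | Sum.inl ⟨f, _⟩ => (G.ends f).map Sum.inl
    | Sum.inr true => s(Sum.inl u, Sum.inr ())
    | Sum.inr false => s(Sum.inl v, Sum.inr ())

/-- Subdividing every edge `e` exactly `k e` times, where `fst`/`snd` pick out the endpoints
of every edge. The edge `e` is replaced by the path
`fst e, (e,0), (e,1), …, (e, k e - 1), snd e` of length `k e + 1`. -/
def subdivide (G : Multigraph) (fst snd : G.E → G.V) (k : G.E → ℕ) : Multigraph where
  V := G.V ⊕ (Σ e : G.E, Fin (k e))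
  E := Σ e : G.E, Fin (k e + 1)
  fintypeV := inferInstance
  decEqV := inferInstance
  fintypeE := inferInstance
  decEqE := inferInstance
  ends := fun f =>
    s( if h : f.2.val = 0 then Sum.inl (fst f.1)
       else Sum.inr ⟨f.1, ⟨f.2.val - 1, by omega⟩⟩,
       if h : f.2.val = k f.1 then Sum.inl (snd f.1)
       else Sum.inr ⟨f.1, ⟨f.2.val, by have := f.2.isLt; omega⟩⟩ )

/-!
A set `F` of edges is the union of two disjoint matchings exactly when every vertex meets at
most two edges of `F` and every union of cycles inside `F` has an even number of edges, so
`ν₂` is the largest size of such a set. An odd cycle with `n` edges has `ν₂ = n - 1`, and its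
subdivision, an even cycle, has `ν₂ = n + 1`.

Otherwise, contracting the two halves of `e` in an optimal set of the subdivision, and
subdividing `e` in an optimal set of `G` rearranged to contain `e` (an endpoint of `e` of
degree at most two leaves room for it), each change the size by one, provided that `e` lies
on no cycle of the set. A cycle through `e` is dealt with by an exchange: as `G` is connected
and not a cycle, the cycle has a vertex `x` of degree at least three, whose third edge `xy`
leads to a vertex `y` of degree at most two off the cycle; trading a cycle edge at `x` for
`xy` opens the cycle into a path without changing the size.
-/

open Finset

lemma _root_.ZMod.val_add_one_eq_or {n : ℕ} [Fact (1 < n)] (i : ZMod n) :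
    (i + 1).val = i.val + 1 ∨ (i + 1 = 0 ∧ i.val + 1 = n) := by
  rcases (Nat.succ_le_of_lt (ZMod.val_lt i)).lt_or_eq with h | h
  · left
    rw [ZMod.val_add_of_lt (a := i) (b := 1) (by rwa [ZMod.val_one n]), ZMod.val_one n]
  · refine Or.inr ⟨?_, h⟩
    rw [← ZMod.natCast_zmod_val i, ← Nat.cast_succ, h, ZMod.natCast_self]

section Periodic

open Function

variable {α : Type*} {f : α → α} {x : α} [NeZero (minimalPeriod f x)]

lemma _root_.Function.iterate_val_add_one (i : ZMod (minimalPeriod f x)) :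
    f^[(i + 1).val] x = f (f^[i.val] x) := by
  rw [← iterate_succ_apply' f, ← iterate_mod_minimalPeriod_eq (n := i.val.succ), ZMod.val_add,
    ZMod.val_one_eq_one_mod, Nat.add_mod_mod]

lemma _root_.Function.iterate_val_injective :
    Injective fun i : ZMod (minimalPeriod f x) => f^[i.val] x :=
  fun _ _ h => ZMod.val_injective _ <|
    iterate_injOn_Iio_minimalPeriod (ZMod.val_lt _) (ZMod.val_lt _) h

end Periodic

variable {G : Multigraph}

lemma exists_ends_eq (f : G.E) : ∃ a b, G.ends f = s(a, b) :=
  @Sym2.ind G.V (fun z => ∃ a b, z = s(a, b)) (fun a b => ⟨a, b, rfl⟩) (G.ends f)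

lemma ne_of_ends_eq {f : G.E} {a b : G.V} (hf : ¬ G.IsLoop f) (h : G.ends f = s(a, b)) :
    a ≠ b := by
  rintro rfl
  exact hf (by rw [IsLoop, h]; exact Sym2.diag_isDiag a)

lemma ends_eq_other {f : G.E} {a : G.V} (h : a ∈ G.ends f) :
    G.ends f = s(a, Sym2.Mem.other' h) :=
  (Sym2.other_spec' h).symm

/-- Unlike in `deg`, a loop at `v` counts once. -/
def degIn (G : Multigraph) (F : Finset G.E) (v : G.V) : ℕ :=
  #(F.filter (v ∈ G.ends ·))

lemma degIn_mono {F F' : Finset G.E} (h : F ⊆ F') (v : G.V) : G.degIn F v ≤ G.degIn F' v :=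
  card_le_card (filter_subset_filter _ h)

lemma degIn_pos_iff {F : Finset G.E} {v : G.V} : 0 < G.degIn F v ↔ ∃ f ∈ F, v ∈ G.ends f := by
  simp [degIn, card_pos, Finset.Nonempty]

lemma degIn_union_le (A B : Finset G.E) (v : G.V) :
    G.degIn (A ∪ B) v ≤ G.degIn A v + G.degIn B v := by
  rw [degIn, filter_union]
  exact card_union_le _ _

lemma degIn_union_of_disjoint {A B : Finset G.E} (h : Disjoint A B) (v : G.V) :
    G.degIn (A ∪ B) v = G.degIn A v + G.degIn B v := by
  rw [degIn, filter_union, card_union_of_disjoint (disjoint_filter_filter h)]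
  rfl

lemma degIn_insert {F : Finset G.E} {g : G.E} (hg : g ∉ F) (v : G.V) :
    G.degIn (insert g F) v = G.degIn F v + if v ∈ G.ends g then 1 else 0 := by
  unfold degIn
  rw [filter_insert]
  split_ifs <;> simp [hg]

lemma degIn_erase {F : Finset G.E} {c : G.E} (hc : c ∈ F) (v : G.V) :
    G.degIn (F.erase c) v + (if v ∈ G.ends c then 1 else 0) = G.degIn F v := by
  rw [← degIn_insert (notMem_erase c F), insert_erase hc]

lemma degIn_lt_degIn_of_mem {F F' : Finset G.E} {g : G.E} {v : G.V} (h : F ⊆ F') (hg : g ∈ F')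
    (hgF : g ∉ F) (hv : v ∈ G.ends g) : G.degIn F v < G.degIn F' v := by
  refine card_lt_card ⟨filter_subset_filter _ h, fun hsub => hgF ?_⟩
  exact (mem_filter.mp (hsub (mem_filter.mpr ⟨hg, hv⟩))).1

lemma deg_eq_degIn_univ (hl : G.Loopless) (v : G.V) : G.deg v = G.degIn univ v := by
  rw [deg, degIn, card_filter]
  refine sum_congr rfl fun f _ => if_neg fun h => hl f ?_
  rw [IsLoop, h]
  exact Sym2.diag_isDiag v

lemma degIn_lt_deg (hl : G.Loopless) {F : Finset G.E} {g : G.E} {v : G.V} (hg : g ∉ F)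
    (hv : v ∈ G.ends g) : G.degIn F v < G.deg v :=
  deg_eq_degIn_univ hl v ▸ degIn_lt_degIn_of_mem (subset_univ F) (mem_univ g) hg hv

lemma exists_notMem_of_degIn_lt_deg (hl : G.Loopless) {F : Finset G.E} {v : G.V}
    (h : G.degIn F v < G.deg v) : ∃ g ∉ F, v ∈ G.ends g := by
  by_contra! hall
  refine h.not_ge (deg_eq_degIn_univ hl v ▸ card_le_card fun g hg => ?_)
  simp only [mem_filter, mem_univ, true_and] at hg ⊢
  exact ⟨by_contra fun hgF => hall g hgF hg, hg⟩

lemma sum_degIn {F : Finset G.E} (hl : ∀ f ∈ F, ¬ G.IsLoop f) :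
    ∑ v, G.degIn F v = 2 * #F := by
  simp only [degIn, card_filter]
  rw [sum_comm, mul_comm, ← smul_eq_mul, ← sum_const]
  refine sum_congr rfl fun f hf => ?_
  obtain ⟨a, b, hab⟩ := exists_ends_eq f
  have hne := ne_of_ends_eq (hl f hf) hab
  rw [← card_filter, hab]
  simpa [Sym2.mem_iff, filter_or, filter_eq'] using card_pair hne

lemma IsMatching.degIn_le_one {M : Finset G.E} (hM : G.IsMatching M) (v : G.V) :
    G.degIn M v ≤ 1 := by
  refine card_le_one.mpr fun f hf g hg => by_contra fun hne => ?_
  rw [mem_filter] at hf hg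
  exact hM.2 f hf.1 g hg.1 hne v hf.2 hg.2

lemma isMatching_empty : G.IsMatching ∅ := by simp [IsMatching]

lemma IsMatching.union {M N : Finset G.E} (hM : G.IsMatching M) (hN : G.IsMatching N)
    (hsep : ∀ f ∈ M, ∀ g ∈ N, ∀ v, v ∈ G.ends f → v ∉ G.ends g) : G.IsMatching (M ∪ N) := by
  refine ⟨fun f hf => (mem_union.mp hf).elim (hM.1 f) (hN.1 f), ?_⟩
  intro f hf g hg hne v hvf hvg
  rcases mem_union.mp hf with hf | hf <;> rcases mem_union.mp hg with hg | hg
  · exact hM.2 f hf g hg hne v hvf hvg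
  · exact hsep f hf g hg v hvf hvg
  · exact hsep g hg f hf v hvg hvf
  · exact hN.2 f hf g hg hne v hvf hvg

lemma IsMatching.insert {M : Finset G.E} {g : G.E} (hM : G.IsMatching M) (hg : ¬ G.IsLoop g)
    (hfree : ∀ v ∈ G.ends g, G.degIn M v = 0) : G.IsMatching (insert g M) := by
  have hsingle : G.IsMatching {g} := ⟨by simpa using hg, by simp⟩
  refine hsingle.union hM ?_
  intro f hf h hh v hvf hvh
  rw [mem_singleton.mp hf] at hvf
  exact (degIn_pos_iff.mpr ⟨h, hh, hvh⟩).ne' (hfree v hvf)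

lemma bddAbove_nu2_set :
    BddAbove {m | ∃ H H' : Finset G.E, G.IsMatching H ∧ G.IsMatching H' ∧
      Disjoint H H' ∧ #H + #H' = m} := by
  refine ⟨Fintype.card G.E, ?_⟩
  rintro m ⟨H, H', -, -, hd, rfl⟩
  rw [← card_union_of_disjoint hd]
  exact card_le_univ _

lemma le_nu2 {H H' : Finset G.E} (hH : G.IsMatching H) (hH' : G.IsMatching H')
    (hd : Disjoint H H') : #H + #H' ≤ G.nu2 :=
  le_csSup bddAbove_nu2_set ⟨H, H', hH, hH', hd, rfl⟩

lemma exists_nu2 : ∃ H H' : Finset G.E, G.IsMatching H ∧ G.IsMatching H' ∧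
    Disjoint H H' ∧ #H + #H' = G.nu2 :=
  Nat.sSup_mem (s := {m | ∃ H H' : Finset G.E, G.IsMatching H ∧ G.IsMatching H' ∧
    Disjoint H H' ∧ #H + #H' = m})
    ⟨0, ∅, ∅, isMatching_empty, isMatching_empty, disjoint_empty_left ∅, rfl⟩ bddAbove_nu2_set

lemma nu2_le_card : G.nu2 ≤ Fintype.card G.E := by
  obtain ⟨H, H', -, -, hd, h⟩ := exists_nu2 (G := G)
  rw [← h, ← card_union_of_disjoint hd]
  exact card_le_univ _

/-- `K` is an edge-disjoint union of cycles. -/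
def IsTwoRegular (G : Multigraph) (K : Finset G.E) : Prop :=
  ∀ v, 0 < G.degIn K v → G.degIn K v = 2

/-- `F` spans a subgraph whose components are paths and even cycles. -/
def IsPathsAndEvenCycles (G : Multigraph) (F : Finset G.E) : Prop :=
  (∀ v, G.degIn F v ≤ 2) ∧ ∀ K ⊆ F, G.IsTwoRegular K → Even #K

lemma IsPathsAndEvenCycles.mono {F F' : Finset G.E} (hF : G.IsPathsAndEvenCycles F)
    (h : F' ⊆ F) : G.IsPathsAndEvenCycles F' :=
  ⟨fun v => (degIn_mono h v).trans (hF.1 v), fun K hK => hF.2 K (hK.trans h)⟩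

lemma two_mul_card_inter_eq {K M : Finset G.E} (hM : G.IsMatching M)
    (hKM : ∀ v, 0 < G.degIn K v → G.degIn (K ∩ M) v = 1) :
    2 * #(K ∩ M) = #(univ.filter fun v => 0 < G.degIn K v) := by
  rw [← sum_degIn fun f hf => hM.1 f (mem_inter.mp hf).2, card_filter]
  refine sum_congr rfl fun v _ => ?_
  split_ifs with hv
  · exact hKM v hv
  · exact Nat.eq_zero_of_le_zero <| (degIn_mono inter_subset_left v).trans (not_lt.mp hv)

lemma isPathsAndEvenCycles_union {H H' : Finset G.E} (hH : G.IsMatching H)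
    (hH' : G.IsMatching H') (hd : Disjoint H H') : G.IsPathsAndEvenCycles (H ∪ H') := by
  refine ⟨fun v => (degIn_union_le H H' v).trans
    (add_le_add (hH.degIn_le_one v) (hH'.degIn_le_one v)), fun K hK hreg => ?_⟩
  have hsplit : (K ∩ H) ∪ (K ∩ H') = K := by rw [← inter_union_distrib_left, inter_eq_left.mpr hK]
  have hdisj : Disjoint (K ∩ H) (K ∩ H') := hd.mono inter_subset_right inter_subset_right
  have hone : ∀ v, 0 < G.degIn K v → G.degIn (K ∩ H) v = 1 ∧ G.degIn (K ∩ H') v = 1 := by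
    intro v hv
    have h2 := hreg v hv
    rw [← hsplit, degIn_union_of_disjoint hdisj] at h2
    have h1 := (degIn_mono (inter_subset_right (s₁ := K)) v).trans (hH.degIn_le_one v)
    have h1' := (degIn_mono (inter_subset_right (s₁ := K)) v).trans (hH'.degIn_le_one v)
    omega
  -- `K ∩ H` and `K ∩ H'` both meet each vertex of `K` once, so they have the same size
  have e1 := two_mul_card_inter_eq hH fun v hv => (hone v hv).1
  have e2 := two_mul_card_inter_eq hH' fun v hv => (hone v hv).2
  rw [← hsplit, card_union_of_disjoint hdisj]
  exact ⟨#(K ∩ H), by omega⟩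

structure Cycle (G : Multigraph) where
  n : ℕ
  two_le : 2 ≤ n
  edge : ZMod n → G.E
  vtx : ZMod n → G.V
  edge_injective : Function.Injective edge
  vtx_injective : Function.Injective vtx
  ends_edge : ∀ i, G.ends (edge i) = s(vtx (i - 1), vtx i)

namespace Cycle

variable (C : G.Cycle)

instance : Fact (1 < C.n) := ⟨C.two_le⟩

def edgeSet : Finset G.E := univ.image C.edge

variable {C}

lemma mem_edgeSet {f : G.E} : f ∈ C.edgeSet ↔ ∃ i, C.edge i = f := by simp [edgeSet]

lemma edge_mem_edgeSet (i : ZMod C.n) : C.edge i ∈ C.edgeSet := mem_edgeSet.mpr ⟨i, rfl⟩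

lemma card_edgeSet : #C.edgeSet = C.n := by
  rw [edgeSet, card_image_of_injective _ C.edge_injective, card_univ, ZMod.card]

lemma vtx_mem_ends (i : ZMod C.n) : C.vtx i ∈ G.ends (C.edge i) := by
  rw [C.ends_edge]; exact Sym2.mem_mk_right _ _

lemma vtx_mem_ends_succ (i : ZMod C.n) : C.vtx i ∈ G.ends (C.edge (i + 1)) := by
  rw [C.ends_edge, add_sub_cancel_right]; exact Sym2.mem_mk_left _ _

lemma edge_ne_edge_succ (i : ZMod C.n) : C.edge i ≠ C.edge (i + 1) :=
  fun h => absurd (C.edge_injective h) (by simp)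

lemma not_isLoop_edge (i : ZMod C.n) : ¬ G.IsLoop (C.edge i) := by
  rw [IsLoop, C.ends_edge, Sym2.mk_isDiag_iff]
  exact fun h => one_ne_zero (sub_eq_self.mp (C.vtx_injective h))

lemma eq_or_eq_add_one_of_vtx_mem {i j : ZMod C.n} (h : C.vtx i ∈ G.ends (C.edge j)) :
    j = i ∨ j = i + 1 := by
  rw [C.ends_edge, Sym2.mem_iff] at h
  rcases h with h | h
  · exact Or.inr (by rw [C.vtx_injective h, sub_add_cancel])
  · exact Or.inl (C.vtx_injective h).symm

lemma filter_vtx_mem_edgeSet (i : ZMod C.n) :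
    C.edgeSet.filter (C.vtx i ∈ G.ends ·) = {C.edge i, C.edge (i + 1)} := by
  ext f
  simp only [mem_filter, mem_edgeSet, mem_insert, mem_singleton]
  constructor
  · rintro ⟨⟨j, rfl⟩, hj⟩
    rcases eq_or_eq_add_one_of_vtx_mem hj with rfl | rfl <;> simp
  · rintro (rfl | rfl)
    exacts [⟨⟨i, rfl⟩, C.vtx_mem_ends i⟩, ⟨⟨i + 1, rfl⟩, C.vtx_mem_ends_succ i⟩]

lemma degIn_edgeSet_vtx (i : ZMod C.n) : G.degIn C.edgeSet (C.vtx i) = 2 := by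
  rw [degIn, filter_vtx_mem_edgeSet, card_pair (C.edge_ne_edge_succ i)]

lemma isTwoRegular_edgeSet : G.IsTwoRegular C.edgeSet := by
  intro v hv
  obtain ⟨f, hf, hvf⟩ := degIn_pos_iff.mp hv
  obtain ⟨j, rfl⟩ := mem_edgeSet.mp hf
  rw [C.ends_edge, Sym2.mem_iff] at hvf
  rcases hvf with rfl | rfl <;> exact degIn_edgeSet_vtx _

lemma eq_or_eq_of_vtx_mem {F : Finset G.E} (hCF : C.edgeSet ⊆ F) {i : ZMod C.n}
    (hdeg : G.degIn F (C.vtx i) ≤ 2) {h : G.E} (hh : h ∈ F) (hv : C.vtx i ∈ G.ends h) :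
    h = C.edge i ∨ h = C.edge (i + 1) := by
  have hsub : C.edgeSet.filter (C.vtx i ∈ G.ends ·) ⊆ F.filter (C.vtx i ∈ G.ends ·) :=
    filter_subset_filter _ hCF
  have heq := eq_of_subset_of_card_le hsub
    (by rw [filter_vtx_mem_edgeSet, card_pair (C.edge_ne_edge_succ i)]; exact hdeg)
  have : h ∈ C.edgeSet.filter (C.vtx i ∈ G.ends ·) := heq ▸ mem_filter.mpr ⟨hh, hv⟩
  simpa [filter_vtx_mem_edgeSet] using this

lemma isMatching_image {S : Finset (ZMod C.n)} (hS : ∀ i ∈ S, i + 1 ∉ S) :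
    G.IsMatching (S.image C.edge) := by
  refine ⟨by simpa using fun i _ => C.not_isLoop_edge i, ?_⟩
  simp only [mem_image]
  rintro _ ⟨i, hi, rfl⟩ _ ⟨j, hj, rfl⟩ hne w hwi hwj
  have hij : i ≠ j := fun h => hne (h ▸ rfl)
  rw [C.ends_edge, Sym2.mem_iff] at hwi
  rcases hwi with rfl | rfl
  · rcases eq_or_eq_add_one_of_vtx_mem hwj with h | h
    · exact hS j hj (by rwa [h, sub_add_cancel])
    · exact hij (by rw [h, sub_add_cancel])
  · rcases eq_or_eq_add_one_of_vtx_mem hwj with h | h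
    · exact hij h.symm
    · exact hS i hi (h ▸ hj)

/-- With wrap-around, `evens` contains the consecutive indices `n - 1, 0` exactly when `n` is
odd. -/
def evens (C : G.Cycle) : Finset (ZMod C.n) := univ.filter fun i => Even i.val

lemma isMatching_image_compl_evens : G.IsMatching (C.evensᶜ.image C.edge) := by
  refine isMatching_image fun i hi hi1 => ?_
  simp only [evens, compl_filter, mem_filter, mem_univ, true_and] at hi hi1
  rcases ZMod.val_add_one_eq_or i with h | ⟨h, -⟩
  · exact hi1 (h ▸ (Nat.not_even_iff_odd.mp hi).add_one)
  · exact hi1 (by rw [h, ZMod.val_zero]; exact ⟨0, rfl⟩)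

lemma isMatching_image_evens_erase_zero : G.IsMatching ((C.evens.erase 0).image C.edge) := by
  refine isMatching_image fun i hi hi1 => ?_
  simp only [evens, mem_erase, mem_filter, mem_univ, true_and] at hi hi1
  rcases ZMod.val_add_one_eq_or i with h | ⟨h, -⟩
  · exact Nat.not_even_iff_odd.mpr (h ▸ hi.2.add_one) hi1.2
  · exact hi1.1 h

lemma isMatching_image_evens (hn : Even C.n) : G.IsMatching (C.evens.image C.edge) := by
  refine isMatching_image fun i hi hi1 => ?_
  simp only [evens, mem_filter, mem_univ, true_and] at hi hi1
  rcases ZMod.val_add_one_eq_or i with h | ⟨-, h⟩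
  · exact Nat.not_even_iff_odd.mpr (h ▸ hi.add_one) hi1
  · exact Nat.not_even_iff_odd.mpr (h ▸ hi.add_one) hn

def reverse (C : G.Cycle) : G.Cycle where
  n := C.n
  two_le := C.two_le
  edge i := C.edge (-i)
  vtx i := C.vtx (-i - 1)
  edge_injective _ _ h := neg_injective (C.edge_injective h)
  vtx_injective _ _ h := by simpa using C.vtx_injective h
  ends_edge i := by rw [C.ends_edge, Sym2.eq_swap]; ring_nf

lemma reverse_edgeSet : C.reverse.edgeSet = C.edgeSet := by
  ext f
  simp only [mem_edgeSet]
  exact ⟨fun ⟨i, h⟩ => ⟨-i, h⟩, fun ⟨i, h⟩ => ⟨-i, by simp [reverse, h]⟩⟩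

end Cycle

def Dart (G : Multigraph) (K : Finset G.E) : Type :=
  {p : G.E × G.V // p.1 ∈ K ∧ p.2 ∈ G.ends p.1}

namespace Dart

variable {K : Finset G.E}

instance : Fintype (G.Dart K) := by unfold Dart; infer_instance

instance : DecidableEq (G.Dart K) := by unfold Dart; infer_instance

def edge (s : G.Dart K) : G.E := s.1.1

def head (s : G.Dart K) : G.V := s.1.2

lemma edge_mem (s : G.Dart K) : s.edge ∈ K := s.2.1

lemma head_mem_ends (s : G.Dart K) : s.head ∈ G.ends s.edge := s.2.2

lemma ext {s t : G.Dart K} (h₁ : s.edge = t.edge) (h₂ : s.head = t.head) : s = t :=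
  Subtype.ext (Prod.ext h₁ h₂)

def rev (s : G.Dart K) : G.Dart K :=
  ⟨(s.edge, Sym2.Mem.other' s.head_mem_ends), s.edge_mem, Sym2.other_mem' _⟩

@[simp] lemma rev_edge (s : G.Dart K) : s.rev.edge = s.edge := rfl

lemma ends_edge (s : G.Dart K) : G.ends s.edge = s(s.head, s.rev.head) :=
  ends_eq_other s.head_mem_ends

lemma rev_ne (hl : G.Loopless) (s : G.Dart K) : s.rev ≠ s := fun h =>
  ne_of_ends_eq (hl _) s.ends_edge (congrArg head h).symm

lemma eq_or_eq_rev {s t : G.Dart K} (h : s.edge = t.edge) : t = s ∨ t = s.rev := by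
  have ht := t.head_mem_ends
  rw [← h, s.ends_edge, Sym2.mem_iff] at ht
  exact ht.imp (ext h.symm) (ext h.symm)

def IsNext (s t : G.Dart K) : Prop :=
  t.edge ≠ s.edge ∧ G.ends t.edge = s(s.head, t.head)

lemma IsNext.rev {s t : G.Dart K} (h : IsNext s t) : IsNext t.rev s.rev := by
  have hrev : t.rev.head = s.head :=
    Sym2.congr_right.mp (t.ends_edge.symm.trans (h.2.trans Sym2.eq_swap))
  exact ⟨fun he => h.1 he.symm, by rw [rev_edge, hrev, s.ends_edge]⟩

lemma rev_rev (s : G.Dart K) : s.rev.rev = s :=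
  ext rfl (Sym2.other_invol' _ _)

lemma rev_injective : Function.Injective (rev : G.Dart K → G.Dart K) :=
  fun s t h => by rw [← s.rev_rev, h, t.rev_rev]

lemma erase_filter_eq_singleton (hK : G.IsTwoRegular K) (s : G.Dart K) :
    ∃ g, (K.filter (s.head ∈ G.ends ·)).erase s.edge = {g} := by
  have hs : s.edge ∈ K.filter (s.head ∈ G.ends ·) := mem_filter.mpr ⟨s.edge_mem, s.head_mem_ends⟩
  have h2 : G.degIn K s.head = 2 := hK _ (degIn_pos_iff.mpr ⟨_, s.edge_mem, s.head_mem_ends⟩)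
  exact card_eq_one.mp (by rw [card_erase_of_mem hs, ← degIn, h2])

lemma IsNext.edge_mem_erase_filter {s t : G.Dart K} (h : IsNext s t) :
    t.edge ∈ (K.filter (s.head ∈ G.ends ·)).erase s.edge :=
  mem_erase.mpr ⟨h.1, mem_filter.mpr ⟨t.edge_mem, h.2 ▸ Sym2.mem_mk_left _ _⟩⟩

lemma exists_isNext (hK : G.IsTwoRegular K) (s : G.Dart K) : ∃ t, IsNext s t := by
  obtain ⟨g, hg⟩ := erase_filter_eq_singleton hK s
  have hmem : g ∈ (K.filter (s.head ∈ G.ends ·)).erase s.edge := hg ▸ mem_singleton_self g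
  simp only [mem_erase, mem_filter] at hmem
  exact ⟨⟨(g, _), hmem.2.1, Sym2.other_mem' hmem.2.2⟩, hmem.1, ends_eq_other hmem.2.2⟩

lemma IsNext.unique (hK : G.IsTwoRegular K) {s t t' : G.Dart K} (h : IsNext s t)
    (h' : IsNext s t') : t = t' := by
  obtain ⟨g, hg⟩ := erase_filter_eq_singleton hK s
  have hedge : t.edge = t'.edge := by
    have h₁ := h.edge_mem_erase_filter
    have h₂ := h'.edge_mem_erase_filter
    rw [hg, mem_singleton] at h₁ h₂
    rw [h₁, h₂]
  exact ext hedge (Sym2.congr_right.mp (h.2.symm.trans (hedge ▸ h'.2)))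

lemma IsNext.inj (hK : G.IsTwoRegular K) {s s' t : G.Dart K} (h : IsNext s t)
    (h' : IsNext s' t) : s = s' :=
  rev_injective (h.rev.unique hK h'.rev)

/-- Reversal acts on an orbit of darts as a reflection `i ↦ c - i`; a reflection of `ZMod n`
fixes an index or swaps two consecutive ones, and neither is possible. -/
lemma rev_ne_of_orbit (hl : G.Loopless) (hK : G.IsTwoRegular K) {n : ℕ} [NeZero n]
    {next : G.Dart K → G.Dart K} (hnext : ∀ s, IsNext s (next s))
    {T : ZMod n → G.Dart K} (hT : ∀ i, T (i + 1) = next (T i)) (a b : ZMod n) :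
    (T a).rev ≠ T b := by
  intro hab
  have hrefl : ∀ k : ℕ, (T (a - k)).rev = T (b + k) := by
    intro k
    induction k with
    | zero => simpa using hab
    | succ k ih =>
      have h := (hnext (T (a - (k + 1)))).rev
      rw [← hT, show a - (k + 1) + 1 = a - k by ring, ih] at h
      push_cast
      rw [← add_assoc, hT]
      exact h.unique hK (hnext _)
  have hd : a - b = ((a - b).val : ZMod n) := (ZMod.natCast_zmod_val _).symm
  obtain ⟨k, hk | hk⟩ := Nat.even_or_odd' (a - b).val
  · have h : a - k = b + k := by rw [hk] at hd; push_cast at hd; linear_combination hd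
    exact rev_ne hl _ (h ▸ hrefl k)
  · have h : a - k = b + k + 1 := by rw [hk] at hd; push_cast at hd; linear_combination hd
    have h' := hrefl k
    rw [h, hT] at h'
    exact (hnext (T (b + k))).1 (by simpa using congrArg edge h')

end Dart

/-- At a repeated vertex `vtx i = vtx j` the edge `edge j` would be a third edge of `K`,
unless `j = i + 1`, and then `edge j` is a loop. -/
lemma injective_vtx_of_closed_walk (hl : G.Loopless) {K : Finset G.E} (hK : G.IsTwoRegular K)
    {n : ℕ} [Fact (1 < n)] {edge : ZMod n → G.E} {vtx : ZMod n → G.V}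
    (hedge : Function.Injective edge) (hmem : ∀ i, edge i ∈ K)
    (hends : ∀ i, G.ends (edge i) = s(vtx (i - 1), vtx i)) : Function.Injective vtx := by
  have hat : ∀ i k, vtx i ∈ G.ends (edge k) → k = i ∨ k = i + 1 := by
    intro i k hk
    have hi : vtx i ∈ G.ends (edge i) := by rw [hends]; exact Sym2.mem_mk_right _ _
    have hi1 : vtx i ∈ G.ends (edge (i + 1)) := by
      rw [hends, add_sub_cancel_right]; exact Sym2.mem_mk_left _ _
    have hne : edge i ≠ edge (i + 1) := fun h => absurd (hedge h) (by simp)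
    have hsub : {edge i, edge (i + 1)} ⊆ K.filter (vtx i ∈ G.ends ·) := by
      simp [insert_subset_iff, hmem, hi, hi1]
    have heq := eq_of_subset_of_card_le hsub <| by
      rw [← degIn, hK _ (degIn_pos_iff.mpr ⟨_, hmem i, hi⟩), card_pair hne]
    have : edge k ∈ ({edge i, edge (i + 1)} : Finset G.E) := heq ▸ mem_filter.mpr ⟨hmem k, hk⟩
    simpa [hedge.eq_iff] using this
  intro i j hij
  by_contra hne
  have hj : vtx i ∈ G.ends (edge j) := by rw [hends, hij]; exact Sym2.mem_mk_right _ _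
  obtain rfl : j = i + 1 := (hat i j hj).resolve_left (Ne.symm hne)
  refine hl (edge (i + 1)) ?_
  rw [IsLoop, hends, add_sub_cancel_right, hij]
  exact Sym2.diag_isDiag _

/-- The cycle is the orbit of a dart under the successor map. -/
lemma exists_cycle (hl : G.Loopless) {K : Finset G.E} (hK : G.IsTwoRegular K) {e : G.E}
    (he : e ∈ K) : ∃ C : G.Cycle, e ∈ C.edgeSet ∧ C.edgeSet ⊆ K := by
  choose next hnext using Dart.exists_isNext hK
  have hinj : Function.Injective next := fun s s' h => (hnext s).inj hK (h ▸ hnext s')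
  obtain ⟨u, _, hu⟩ := exists_ends_eq e
  let s₀ : G.Dart K := ⟨(e, u), he, hu ▸ Sym2.mem_mk_left _ _⟩
  set n := Function.minimalPeriod next s₀
  have : NeZero n :=
    ⟨(Function.minimalPeriod_pos_of_mem_periodicPts (hinj.mem_periodicPts s₀)).ne'⟩
  let T : ZMod n → G.Dart K := fun i => next^[i.val] s₀
  have hT : ∀ i, T (i + 1) = next (T i) := Function.iterate_val_add_one
  have hedge : Function.Injective fun i => (T i).edge := fun i j h =>
    Function.iterate_val_injective (((Dart.eq_or_eq_rev h).resolve_right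
      (Dart.rev_ne_of_orbit hl hK hnext hT i j).symm).symm)
  have hends : ∀ i, G.ends (T i).edge = s((T (i - 1)).head, (T i).head) := fun i => by
    rw [← sub_add_cancel i 1, hT, sub_add_cancel]
    exact (hnext _).2
  have two_le : 2 ≤ n := by
    refine (Nat.one_le_iff_ne_zero.mpr (NeZero.ne n)).lt_of_ne' fun h1 => ?_
    exact (hnext s₀).1 (by rw [Function.minimalPeriod_eq_one_iff_isFixedPt.mp h1])
  have : Fact (1 < n) := ⟨two_le⟩
  refine ⟨⟨n, two_le, fun i => (T i).edge, fun i => (T i).head, hedge,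
    injective_vtx_of_closed_walk hl hK hedge (fun i => (T i).edge_mem) hends, hends⟩,
    Cycle.mem_edgeSet.mpr ⟨0, by simp [T]; rfl⟩, ?_⟩
  intro f hf
  obtain ⟨i, rfl⟩ := Cycle.mem_edgeSet.mp hf
  exact (T i).edge_mem

lemma Cycle.notMem_ends_of_mem_sdiff {C : G.Cycle} {F : Finset G.E} (hCF : C.edgeSet ⊆ F)
    (hdeg : ∀ v, G.degIn F v ≤ 2) {h : G.E} (hh : h ∈ F \ C.edgeSet) (i : ZMod C.n) {w : G.V}
    (hw : w ∈ G.ends (C.edge i)) : w ∉ G.ends h := by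
  rw [mem_sdiff] at hh
  rw [C.ends_edge, Sym2.mem_iff] at hw
  rintro hwh
  rcases hw with rfl | rfl <;>
  · rcases C.eq_or_eq_of_vtx_mem hCF (hdeg _) hh.1 hwh with rfl | rfl <;>
      exact hh.2 (C.edge_mem_edgeSet _)

lemma exists_matchings_of_erase (hl : G.Loopless) {F : Finset G.E}
    (hdeg : ∀ v, G.degIn F v ≤ 2) {g : G.E} (hgF : g ∈ F) {v : G.V} (hvg : v ∈ G.ends g)
    (hv : G.degIn F v = 1) {H H' : Finset G.E} (hH : G.IsMatching H) (hH' : G.IsMatching H')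
    (hd : Disjoint H H') (hun : H ∪ H' = F.erase g) :
    ∃ M M', G.IsMatching M ∧ G.IsMatching M' ∧ Disjoint M M' ∧ M ∪ M' = F := by
  set z := Sym2.Mem.other' hvg
  have hdeg' : ∀ w, G.degIn H w + G.degIn H' w + (if w ∈ G.ends g then 1 else 0) =
      G.degIn F w := fun w => by rw [← degIn_union_of_disjoint hd, hun, degIn_erase hgF]
  have hv0 := hdeg' v
  have hz1 := hdeg' z
  rw [if_pos hvg, hv] at hv0
  rw [if_pos (Sym2.other_mem' hvg)] at hz1
  have := hdeg z
  have hfree : ∀ M : Finset G.E, G.degIn M v = 0 → G.degIn M z = 0 →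
      ∀ w ∈ G.ends g, G.degIn M w = 0 := by
    intro M hv hz w hw
    rw [ends_eq_other hvg, Sym2.mem_iff] at hw
    rcases hw with rfl | rfl <;> assumption
  have hgH : g ∉ H ∪ H' := hun ▸ notMem_erase g F
  rw [mem_union, not_or] at hgH
  rw [← insert_erase hgF, ← hun]
  by_cases hHz : G.degIn H z = 0
  · exact ⟨insert g H, H', hH.insert (hl g) (hfree H (by omega) hHz), hH',
      disjoint_insert_left.mpr ⟨hgH.2, hd⟩, insert_union g H H'⟩
  · exact ⟨H, insert g H', hH, hH'.insert (hl g) (hfree H' (by omega) (by omega)),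
      disjoint_insert_right.mpr ⟨hgH.1, hd⟩, union_insert g H H'⟩

lemma Cycle.exists_matchings_of_sdiff {C : G.Cycle} (hn : Even C.n) {F : Finset G.E}
    (hCF : C.edgeSet ⊆ F) (hdeg : ∀ v, G.degIn F v ≤ 2) {H H' : Finset G.E}
    (hH : G.IsMatching H) (hH' : G.IsMatching H') (hd : Disjoint H H')
    (hun : H ∪ H' = F \ C.edgeSet) :
    ∃ M M', G.IsMatching M ∧ G.IsMatching M' ∧ Disjoint M M' ∧ M ∪ M' = F := by
  have hsep : ∀ S : Finset (ZMod C.n), ∀ N ⊆ F \ C.edgeSet,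
      ∀ f ∈ S.image C.edge, ∀ h ∈ N, ∀ w, w ∈ G.ends f → w ∉ G.ends h := by
    intro S N hN f hf h hh w hw
    obtain ⟨i, -, rfl⟩ := mem_image.mp hf
    exact C.notMem_ends_of_mem_sdiff hCF hdeg (hN hh) i hw
  have hHF : H ⊆ F \ C.edgeSet := hun ▸ subset_union_left
  have hH'F : H' ⊆ F \ C.edgeSet := hun ▸ subset_union_right
  have hCimage : ∀ S : Finset (ZMod C.n), S.image C.edge ⊆ C.edgeSet :=
    fun S => image_subset_image (subset_univ S)
  refine ⟨C.evens.image C.edge ∪ H, C.evensᶜ.image C.edge ∪ H',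
    (C.isMatching_image_evens hn).union hH (hsep _ H hHF),
    C.isMatching_image_compl_evens.union hH' (hsep _ H' hH'F), ?_, ?_⟩
  · have hCF' : ∀ N ⊆ F \ C.edgeSet, Disjoint C.edgeSet N :=
      fun N hN => disjoint_sdiff.mono_right hN
    exact disjoint_union_left.mpr ⟨disjoint_union_right.mpr
      ⟨(disjoint_image C.edge_injective).mpr disjoint_compl_right,
        (hCF' H' hH'F).mono_left (hCimage _)⟩,
      disjoint_union_right.mpr ⟨((hCF' H hHF).mono_left (hCimage _)).symm, hd⟩⟩
  · rw [union_union_union_comm, ← image_union, union_compl, hun]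
    exact union_sdiff_of_subset hCF

/-- Remove an edge at a vertex of degree one or, if there is none, a whole cycle, which is even
and is split alternately. -/
theorem exists_matchings_of_isPathsAndEvenCycles (hl : G.Loopless) {F : Finset G.E}
    (hF : G.IsPathsAndEvenCycles F) :
    ∃ H H', G.IsMatching H ∧ G.IsMatching H' ∧ Disjoint H H' ∧ H ∪ H' = F := by
  induction F using Finset.strongInduction with
  | H F ih =>
  by_cases hpend : ∃ v, G.degIn F v = 1
  · obtain ⟨v, hv⟩ := hpend
    obtain ⟨g, hgF, hvg⟩ := degIn_pos_iff.mp (hv ▸ one_pos)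
    obtain ⟨H, H', hH, hH', hd, hun⟩ := ih _ (erase_ssubset hgF) (hF.mono (erase_subset g F))
    exact exists_matchings_of_erase hl hF.1 hgF hvg hv hH hH' hd hun
  rcases F.eq_empty_or_nonempty with rfl | ⟨g, hg⟩
  · exact ⟨∅, ∅, isMatching_empty, isMatching_empty, disjoint_empty_left _, rfl⟩
  simp only [not_exists] at hpend
  have hreg : G.IsTwoRegular F := fun v _ => by
    have := hF.1 v; have := hpend v; omega
  obtain ⟨C, -, hCF⟩ := exists_cycle hl hreg hg
  have hn : Even C.n := Cycle.card_edgeSet (C := C) ▸ hF.2 _ hCF C.isTwoRegular_edgeSet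
  obtain ⟨H, H', hH, hH', hd, hun⟩ :=
    ih _ (sdiff_ssubset hCF ⟨_, C.edge_mem_edgeSet 0⟩) (hF.mono sdiff_subset)
  exact C.exists_matchings_of_sdiff hn hCF hF.1 hH hH' hd hun

lemma IsPathsAndEvenCycles.card_le_nu2 (hl : G.Loopless) {F : Finset G.E}
    (hF : G.IsPathsAndEvenCycles F) : #F ≤ G.nu2 := by
  obtain ⟨H, H', hH, hH', hd, rfl⟩ := exists_matchings_of_isPathsAndEvenCycles hl hF
  exact (card_union_of_disjoint hd).trans_le (le_nu2 hH hH' hd)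

lemma exists_isPathsAndEvenCycles_card_eq_nu2 :
    ∃ F : Finset G.E, G.IsPathsAndEvenCycles F ∧ #F = G.nu2 := by
  obtain ⟨H, H', hH, hH', hd, h⟩ := exists_nu2 (G := G)
  exact ⟨H ∪ H', isPathsAndEvenCycles_union hH hH' hd, by rw [card_union_of_disjoint hd, h]⟩

namespace Cycle

variable {C : G.Cycle}

lemma exists_vtx_eq_of_mem_ends {w : G.V} {k : ZMod C.n} (h : w ∈ G.ends (C.edge k)) :
    ∃ j, C.vtx j = w := by
  rw [C.ends_edge, Sym2.mem_iff] at h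
  exact h.elim (fun h => ⟨_, h.symm⟩) (fun h => ⟨_, h.symm⟩)

lemma two_le_deg (hl : G.Loopless) (i : ZMod C.n) : 2 ≤ G.deg (C.vtx i) := by
  rw [deg_eq_degIn_univ hl, ← C.degIn_edgeSet_vtx i]
  exact degIn_mono (subset_univ _) _

lemma three_le_deg (hl : G.Loopless) {g : G.E} (hg : g ∉ C.edgeSet) {i : ZMod C.n}
    (hi : C.vtx i ∈ G.ends g) : 3 ≤ G.deg (C.vtx i) := by
  have h := degIn_insert hg (C.vtx i)
  rw [if_pos hi, degIn_edgeSet_vtx] at h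
  rw [deg_eq_degIn_univ hl]
  exact (h.symm.le).trans (degIn_mono (subset_univ _) _)

lemma exists_vtx_eq (hl : G.Loopless) (hconn : G.Connected) (hdeg : ∀ i, G.deg (C.vtx i) = 2)
    (v : G.V) : ∃ i, C.vtx i = v := by
  induction hconn (C.vtx 0) v with
  | refl => exact ⟨0, rfl⟩
  | tail _ hbc ih =>
    obtain ⟨i, rfl⟩ := ih
    obtain ⟨f, hf⟩ := hbc
    have hdeg' : G.degIn univ (C.vtx i) ≤ 2 := by rw [← deg_eq_degIn_univ hl, hdeg]
    rcases C.eq_or_eq_of_vtx_mem (subset_univ _) hdeg' (mem_univ f)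
      (hf ▸ Sym2.mem_mk_left _ _) with rfl | rfl <;>
    exact exists_vtx_eq_of_mem_ends (hf ▸ Sym2.mem_mk_right _ _)

lemma edge_surjective (hl : G.Loopless) (hconn : G.Connected)
    (hdeg : ∀ i, G.deg (C.vtx i) = 2) : Function.Surjective C.edge := by
  intro f
  obtain ⟨a, b, hab⟩ := exists_ends_eq f
  obtain ⟨i, rfl⟩ := exists_vtx_eq hl hconn hdeg a
  have hdeg' : G.degIn univ (C.vtx i) ≤ 2 := by rw [← deg_eq_degIn_univ hl, hdeg]
  rcases C.eq_or_eq_of_vtx_mem (subset_univ _) hdeg' (mem_univ f)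
    (hab ▸ Sym2.mem_mk_left _ _) with rfl | rfl
  exacts [⟨_, rfl⟩, ⟨_, rfl⟩]

end Cycle

lemma exists_cycle_card_eq (hl : G.Loopless) (hconn : G.Connected) (hdeg : ∀ v, G.deg v = 2)
    (e : G.E) : ∃ C : G.Cycle, Fintype.card G.E = C.n := by
  have hreg : G.IsTwoRegular univ := fun v _ => by rw [← deg_eq_degIn_univ hl, hdeg]
  obtain ⟨C, -, -⟩ := exists_cycle hl hreg (mem_univ e)
  refine ⟨C, ?_⟩
  rw [← C.card_edgeSet, Cycle.edgeSet,
    image_univ_of_surjective (C.edge_surjective hl hconn fun i => hdeg _), card_univ]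

lemma nu2_eq_card_of_even (hl : G.Loopless) (hconn : G.Connected) (hdeg : ∀ v, G.deg v = 2)
    (heven : Even (Fintype.card G.E)) : G.nu2 = Fintype.card G.E := by
  refine le_antisymm nu2_le_card ?_
  rcases isEmpty_or_nonempty G.E with hE | ⟨⟨e⟩⟩
  · simp
  obtain ⟨C, hC⟩ := exists_cycle_card_eq hl hconn hdeg e
  rw [hC] at heven ⊢
  calc C.n = #(C.evens.image C.edge) + #(C.evensᶜ.image C.edge) := by
        rw [card_image_of_injective _ C.edge_injective, card_image_of_injective _ C.edge_injective,
          card_add_card_compl, ZMod.card]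
    _ ≤ G.nu2 := le_nu2 (C.isMatching_image_evens heven) C.isMatching_image_compl_evens
        ((disjoint_image C.edge_injective).mpr disjoint_compl_right)

lemma nu2_add_one_eq_card_of_odd (hl : G.Loopless) (hconn : G.Connected)
    (hdeg : ∀ v, G.deg v = 2) (hodd : Odd (Fintype.card G.E)) :
    G.nu2 + 1 = Fintype.card G.E := by
  have hreg : G.IsTwoRegular univ := fun v _ => by rw [← deg_eq_degIn_univ hl, hdeg]
  -- a set of paths and even cycles with `|E|` edges would be all of `G`, an odd cycle
  have hlt : G.nu2 < Fintype.card G.E := by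
    obtain ⟨F, hF, hcard⟩ := exists_isPathsAndEvenCycles_card_eq_nu2 (G := G)
    refine (hcard ▸ card_le_univ F).lt_of_ne fun h => ?_
    have heven := hF.2 univ (eq_univ_of_card F (hcard ▸ h) ▸ subset_refl _) hreg
    exact Nat.not_even_iff_odd.mpr hodd (card_univ (α := G.E) ▸ heven)
  obtain ⟨e⟩ : Nonempty G.E := Fintype.card_pos_iff.mp hodd.pos
  obtain ⟨C, hC⟩ := exists_cycle_card_eq hl hconn hdeg e
  have h0 : (0 : ZMod C.n) ∈ C.evens := by simp [Cycle.evens]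
  have : C.n ≤ #((C.evens.erase 0).image C.edge) + #(C.evensᶜ.image C.edge) + 1 := by
    have := card_add_card_compl C.evens
    rw [ZMod.card] at this
    rw [card_image_of_injective _ C.edge_injective, card_image_of_injective _ C.edge_injective,
      card_erase_of_mem h0]
    omega
  have := le_nu2 C.isMatching_image_evens_erase_zero C.isMatching_image_compl_evens
    ((disjoint_image C.edge_injective).mpr (disjoint_compl_right.mono_left (erase_subset _ _)))
  omega

namespace Cycle

variable {C : G.Cycle}

/-- The far end `y` has degree at most two by `hedge`, so it is off the cycle and meets at most
one edge of `F`. -/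
lemma exists_edge_off (hl : G.Loopless)
    (hedge : ∀ f : G.E, ∀ a b : G.V, G.ends f = s(a, b) → ¬ (3 ≤ G.deg a ∧ 3 ≤ G.deg b))
    {F : Finset G.E} (hCF : C.edgeSet ⊆ F) (hdeg : ∀ v, G.degIn F v ≤ 2) {i : ZMod C.n}
    (h3 : 3 ≤ G.deg (C.vtx i)) :
    ∃ g y, g ∉ F ∧ G.ends g = s(C.vtx i, y) ∧ (∀ j, y ≠ C.vtx j) ∧ G.degIn F y ≤ 1 := by
  obtain ⟨g, hgF, hg⟩ := exists_notMem_of_degIn_lt_deg hl ((hdeg _).trans_lt h3)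
  have hends := ends_eq_other hg
  have hy : G.deg (Sym2.Mem.other' hg) ≤ 2 := by
    have := hedge g _ _ hends
    omega
  refine ⟨g, _, hgF, hends, fun j hj => ?_, ?_⟩
  · have := three_le_deg hl (fun h => hgF (hCF h)) (hj ▸ Sym2.other_mem' hg)
    rw [← hj] at this
    omega
  · have := degIn_lt_deg hl hgF (Sym2.other_mem' hg)
    omega

lemma edge_add_mem {K : Finset G.E} (hK : G.IsTwoRegular K) {a : ZMod C.n} {m : ℕ}
    (hat : ∀ j < m, ∀ h ∈ K, C.vtx (a + j) ∈ G.ends h →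
      h = C.edge (a + j) ∨ h = C.edge (a + j + 1))
    (ha : C.edge a ∈ K) : C.edge (a + m) ∈ K := by
  induction m with
  | zero => simpa using ha
  | succ m ih =>
    have hm := ih fun j hj => hat j (by omega)
    have h2 := hK _ (degIn_pos_iff.mpr ⟨_, hm, C.vtx_mem_ends _⟩)
    obtain ⟨h, hh, hne⟩ := exists_mem_ne (s := K.filter (C.vtx (a + m) ∈ G.ends ·))
      (by rw [← degIn, h2]; norm_num) (C.edge (a + m))
    obtain ⟨hK', hv⟩ := mem_filter.mp hh
    rcases hat m (by omega) h hK' hv with rfl | rfl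
    · exact absurd rfl hne
    · simpa [add_assoc] using hK'

variable {F : Finset G.E} {i : ZMod C.n} {g : G.E} {y : G.V}

lemma degIn_exchange_le (hCF : C.edgeSet ⊆ F) (hdeg : ∀ v, G.degIn F v ≤ 2) (hgF : g ∉ F)
    (hg : G.ends g = s(C.vtx i, y)) (hyF : G.degIn F y ≤ 1) (v : G.V) :
    G.degIn (insert g (F.erase (C.edge i))) v ≤ 2 := by
  have hc := degIn_erase (hCF (C.edge_mem_edgeSet i)) v
  rw [degIn_insert (fun h => hgF (mem_of_mem_erase h))]
  have := hdeg v
  by_cases hv : v ∈ G.ends g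
  · rw [hg, Sym2.mem_iff] at hv
    rcases hv with rfl | rfl
    · rw [if_pos (C.vtx_mem_ends i)] at hc
      split_ifs <;> omega
    · split_ifs at hc <;> split_ifs <;> omega
  · split_ifs at hc <;> rw [if_neg hv] <;> omega

/-- The exchange opens `C` into a path hanging from `y`. A cycle containing an edge of `C`
would follow `C` up to the removed edge `edge i`, and one through `g` would continue along
`edge (i + 1)`. -/
lemma subset_sdiff_of_exchange (hCF : C.edgeSet ⊆ F) (hdeg : ∀ v, G.degIn F v ≤ 2)
    (hgF : g ∉ F) (hg : G.ends g = s(C.vtx i, y)) (hy : ∀ j, y ≠ C.vtx j) {K : Finset G.E}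
    (hK : K ⊆ insert g (F.erase (C.edge i))) (hreg : G.IsTwoRegular K) :
    K ⊆ F \ C.edgeSet := by
  have hat : ∀ k ≠ i, ∀ h ∈ K, C.vtx k ∈ G.ends h → h = C.edge k ∨ h = C.edge (k + 1) := by
    intro k hk h hh hv
    rcases mem_insert.mp (hK hh) with rfl | hh'
    · rw [hg, Sym2.mem_iff] at hv
      exact hv.elim (fun h => absurd (C.vtx_injective h) hk) (fun h => absurd h.symm (hy k))
    · exact C.eq_or_eq_of_vtx_mem hCF (hdeg _) (mem_of_mem_erase hh') hv
  have hci : C.edge i ∉ K := fun h => by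
    have := hK h
    simp only [mem_insert, notMem_erase, or_false] at this
    exact hgF (this ▸ hCF (C.edge_mem_edgeSet i))
  have hC : ∀ j, C.edge j ∉ K := by
    intro j hj
    have := edge_add_mem (m := (i - j).val) hreg (fun t ht => hat _ fun h => ?_) hj
    · rw [ZMod.natCast_zmod_val, add_sub_cancel] at this
      exact hci this
    have : (t : ZMod C.n).val = (i - j).val := by rw [← h, add_sub_cancel_left]
    rw [ZMod.val_natCast_of_lt (ht.trans (ZMod.val_lt _))] at this
    omega
  have hgK : g ∉ K := by
    intro hgK
    have h2 := hreg _ (degIn_pos_iff.mpr ⟨g, hgK, hg ▸ Sym2.mem_mk_left _ _⟩)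
    obtain ⟨h, hh, hne⟩ := exists_mem_ne (s := K.filter (C.vtx i ∈ G.ends ·))
      (by rw [← degIn, h2]; norm_num) g
    obtain ⟨hK', hv⟩ := mem_filter.mp hh
    rcases mem_insert.mp (hK hK') with rfl | hh'
    · exact hne rfl
    rcases C.eq_or_eq_of_vtx_mem hCF (hdeg _) (mem_of_mem_erase hh') hv with rfl | rfl
    · exact hci hK'
    · exact hC _ hK'
  intro h hh
  rcases mem_insert.mp (hK hh) with rfl | hh'
  · exact absurd hh hgK
  · exact mem_sdiff.mpr ⟨mem_of_mem_erase hh', fun hC' => by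
      obtain ⟨j, rfl⟩ := mem_edgeSet.mp hC'; exact hC j hh⟩

lemma exists_reorient (C : G.Cycle) (i : ZMod C.n) (e : G.E) :
    ∃ (C' : G.Cycle) (i' : ZMod C'.n), C'.edgeSet = C.edgeSet ∧ C'.vtx i' = C.vtx i ∧
      C'.edge i' ≠ e := by
  by_cases he : C.edge i = e
  · refine ⟨C.reverse, (-i - 1 : ZMod C.n), reverse_edgeSet, by simp [reverse], ?_⟩
    simpa [reverse, ← he, add_comm] using (C.edge_ne_edge_succ i).symm
  · exact ⟨C, i, rfl, rfl, he⟩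

end Cycle

/-- If `e` lies on a cycle of `F`, that cycle passes through a vertex of degree at least three
(otherwise it would be all of `G`), where it can be opened by an exchange. -/
lemma exists_isPathsAndEvenCycles_not_on_cycle (hl : G.Loopless) (hconn : G.Connected)
    (hnc : ¬ ∀ v, G.deg v = 2)
    (hedge : ∀ f : G.E, ∀ a b : G.V, G.ends f = s(a, b) → ¬ (3 ≤ G.deg a ∧ 3 ≤ G.deg b))
    {e : G.E} {F : Finset G.E} (hdeg : ∀ v, G.degIn F v ≤ 2)
    (hev : ∀ K ⊆ F, G.IsTwoRegular K → e ∉ K → Even #K) (he : e ∈ F) :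
    ∃ F', G.IsPathsAndEvenCycles F' ∧ e ∈ F' ∧ (∀ K ⊆ F', G.IsTwoRegular K → e ∉ K) ∧
      #F' = #F := by
  by_cases hcyc : ∃ K ⊆ F, G.IsTwoRegular K ∧ e ∈ K
  swap
  · simp only [not_exists, not_and] at hcyc
    exact ⟨F, ⟨hdeg, fun K hK hreg => hev K hK hreg (hcyc K hK hreg)⟩, he, hcyc, rfl⟩
  obtain ⟨K, hKF, hK, heK⟩ := hcyc
  obtain ⟨C₀, heC, hCK⟩ := exists_cycle hl hK heK
  obtain ⟨i₀, h3⟩ : ∃ i, 3 ≤ G.deg (C₀.vtx i) := by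
    by_contra! h
    have h2 : ∀ i, G.deg (C₀.vtx i) = 2 := fun i => by
      have := h i; have := C₀.two_le_deg hl i; omega
    exact hnc fun v => by
      obtain ⟨i, rfl⟩ := C₀.exists_vtx_eq hl hconn h2 v
      exact h2 i
  obtain ⟨C, i, hCC, hvtx, hne⟩ := C₀.exists_reorient i₀ e
  rw [← hvtx] at h3
  rw [← hCC] at heC hCK
  have hCF := hCK.trans hKF
  obtain ⟨g, y, hgF, hg, hy, hyF⟩ := C.exists_edge_off hl hedge hCF hdeg h3
  have hopen := fun K hK hreg => C.subset_sdiff_of_exchange (K := K) hCF hdeg hgF hg hy hK hreg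
  have hgF' : g ∉ F.erase (C.edge i) := fun h => hgF (mem_of_mem_erase h)
  refine ⟨insert g (F.erase (C.edge i)), ⟨C.degIn_exchange_le hCF hdeg hgF hg hyF,
    fun K hK hreg => ?_⟩, mem_insert_of_mem (mem_erase.mpr ⟨hne.symm, he⟩),
    fun K hK hreg heK => (mem_sdiff.mp (hopen K hK hreg heK)).2 heC, ?_⟩
  · exact hev K ((hopen K hK hreg).trans sdiff_subset) hreg
      fun heK => (mem_sdiff.mp (hopen K hK hreg heK)).2 heC
  · rw [card_insert_of_notMem hgF', card_erase_add_one (hCF (C.edge_mem_edgeSet i))]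

-- lets edges and vertices of the subdivision be written as `Sum.inl _` and `Sum.inr _`
attribute [reducible] subdivideOnce

section Subdivision

variable {e : G.E} {u v : G.V}

def newEdges (G : Multigraph) (e : G.E) (u v : G.V) : Finset (G.subdivideOnce e u v).E :=
  {Sum.inr true, Sum.inr false}

lemma card_newEdges : #(G.newEdges e u v) = 2 := by
  simp [newEdges]

def liftEdges (e : G.E) (u v : G.V) (K : Finset G.E) : Finset (G.subdivideOnce e u v).E :=
  (K.subtype (· ≠ e)).map Function.Embedding.inl

/-- `e` is put back only when both of its halves are present. -/
def contractEdges (e : G.E) (u v : G.V) (F' : Finset (G.subdivideOnce e u v).E) :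
    Finset G.E :=
  univ.filter fun f => if h : f = e then Sum.inr true ∈ F' ∧ Sum.inr false ∈ F'
    else Sum.inl ⟨f, h⟩ ∈ F'

lemma liftEdges_union_inter_newEdges (F' : Finset (G.subdivideOnce e u v).E) :
    liftEdges e u v ((contractEdges e u v F').erase e) ∪ (F' ∩ G.newEdges e u v) = F' := by
  ext f'
  rcases f' with ⟨f, hf⟩ | b
  · simp [liftEdges, contractEdges, newEdges, hf]
  · simp [liftEdges, newEdges]

lemma card_liftEdges {K : Finset G.E} (he : e ∉ K) : #(liftEdges e u v K) = #K := by
  rw [liftEdges, card_map, card_subtype, filter_true_of_mem fun f hf => ne_of_mem_of_not_mem hf he]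

lemma contractEdges_liftEdges {K : Finset G.E} (he : e ∉ K) :
    contractEdges e u v (liftEdges e u v K) = K := by
  ext f
  by_cases hf : f = e
  · subst hf; simpa [contractEdges, liftEdges] using he
  · simp [contractEdges, liftEdges, hf]

lemma self_mem_contractEdges {F' : Finset (G.subdivideOnce e u v).E} :
    e ∈ contractEdges e u v F' ↔ Sum.inr true ∈ F' ∧ Sum.inr false ∈ F' := by
  simp [contractEdges]

lemma contractEdges_mono {F' L' : Finset (G.subdivideOnce e u v).E} (h : F' ⊆ L') :
    contractEdges e u v F' ⊆ contractEdges e u v L' := by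
  intro f hf
  by_cases hfe : f = e
  · subst hfe
    rw [self_mem_contractEdges] at hf ⊢
    exact ⟨h hf.1, h hf.2⟩
  · simp only [contractEdges, mem_filter, mem_univ, hfe, dite_false, true_and] at hf ⊢
    exact h hf

lemma inl_mem_ends_inr_true {z : G.V} :
    (Sum.inl z : (G.subdivideOnce e u v).V) ∈ (G.subdivideOnce e u v).ends (Sum.inr true) ↔
      z = u := by
  simp

lemma inl_mem_ends_inr_false {z : G.V} :
    (Sum.inl z : (G.subdivideOnce e u v).V) ∈ (G.subdivideOnce e u v).ends (Sum.inr false) ↔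
      z = v := by
  simp

lemma degIn_inr (F' : Finset (G.subdivideOnce e u v).E) :
    (G.subdivideOnce e u v).degIn F' (Sum.inr ()) = #(F' ∩ G.newEdges e u v) := by
  unfold degIn
  congr 1
  ext (⟨f, hf⟩ | b)
  · simp [Sym2.mem_map, newEdges]
  · cases b <;> simp [newEdges]

lemma degIn_contractEdges (huv : u ≠ v) (he : G.ends e = s(u, v))
    {F' : Finset (G.subdivideOnce e u v).E}
    (hbal : Sum.inr true ∈ F' ↔ Sum.inr false ∈ F') (z : G.V) :
    G.degIn (contractEdges e u v F') z = (G.subdivideOnce e u v).degIn F' (Sum.inl z) := by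
  symm
  refine card_bij (fun f' _ => Sum.elim Subtype.val (fun _ => e) f') ?_ ?_ ?_
  · rintro (⟨f, hf⟩ | _ | _) h
    · simpa [contractEdges, hf, Sym2.mem_map] using h
    all_goals simp only [mem_filter] at h ⊢
    · rw [inl_mem_ends_inr_false] at h
      refine ⟨by simp [contractEdges, hbal, h.1], ?_⟩
      rw [Sum.elim_inr, he, h.2]
      exact Sym2.mem_mk_right _ _
    · rw [inl_mem_ends_inr_true] at h
      refine ⟨by simp [contractEdges, ← hbal, h.1], ?_⟩
      rw [Sum.elim_inr, he, h.2]
      exact Sym2.mem_mk_left _ _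
  · rintro (⟨f, hf⟩ | b) h₁ (⟨f', hf'⟩ | b') h₂ h
    · simp_all
    · exact absurd h hf
    · exact absurd h.symm hf'
    · simp only [mem_filter] at h₁ h₂
      cases b <;> cases b' <;> simp_all
  · intro f hf
    simp only [mem_filter] at hf
    by_cases hfe : f = e
    · subst hfe
      obtain ⟨hboth, hz⟩ := hf
      simp only [contractEdges, mem_filter, mem_univ, dite_true, true_and] at hboth
      rw [he, Sym2.mem_iff] at hz
      rcases hz with rfl | rfl
      · exact ⟨Sum.inr true, by simp [hboth.1], rfl⟩
      · exact ⟨Sum.inr false, by simp [hboth.2], rfl⟩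
    · exact ⟨Sum.inl ⟨f, hfe⟩, by simpa [contractEdges, hfe, Sym2.mem_map] using hf, rfl⟩

lemma card_inter_newEdges (F' : Finset (G.subdivideOnce e u v).E) :
    #(F' ∩ G.newEdges e u v) =
      (if Sum.inr true ∈ F' then 1 else 0) + (if Sum.inr false ∈ F' then 1 else 0) := by
  by_cases h₁ : Sum.inr true ∈ F' <;> by_cases h₂ : Sum.inr false ∈ F' <;>
    simp [newEdges, h₁, h₂, inter_insert_of_mem, inter_insert_of_notMem, inter_singleton_of_mem,
      inter_singleton_of_notMem]

lemma inr_mem_iff_of_isTwoRegular {K' : Finset (G.subdivideOnce e u v).E}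
    (hK' : (G.subdivideOnce e u v).IsTwoRegular K') :
    Sum.inr true ∈ K' ↔ Sum.inr false ∈ K' := by
  have h := hK' (Sum.inr ())
  rw [degIn_inr, card_inter_newEdges] at h
  by_cases h₁ : Sum.inr true ∈ K' <;> by_cases h₂ : Sum.inr false ∈ K' <;> simp_all

lemma card_eq_card_erase_contractEdges_add (F' : Finset (G.subdivideOnce e u v).E) :
    #F' = #((contractEdges e u v F').erase e) + #(F' ∩ G.newEdges e u v) := by
  conv_lhs => rw [← liftEdges_union_inter_newEdges F']
  rw [card_union_of_disjoint, card_liftEdges (notMem_erase e _)]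
  rw [disjoint_left]
  rintro (f | b) h₁ h₂
  · simp [newEdges] at h₂
  · simp [liftEdges] at h₁

lemma liftEdges_subset {K : Finset G.E} {F' : Finset (G.subdivideOnce e u v).E}
    (h : K ⊆ contractEdges e u v F') : liftEdges e u v K ⊆ F' := by
  rintro (⟨f, hf⟩ | b) hmem
  · have := h (by simpa [liftEdges] using hmem)
    simpa [contractEdges, hf] using this
  · simp [liftEdges] at hmem

lemma degIn_liftEdges (huv : u ≠ v) (he : G.ends e = s(u, v)) {K : Finset G.E} (heK : e ∉ K)
    (z : G.V) : (G.subdivideOnce e u v).degIn (liftEdges e u v K) (Sum.inl z) = G.degIn K z := by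
  rw [← degIn_contractEdges huv he (by simp [liftEdges]) z, contractEdges_liftEdges heK]

lemma isTwoRegular_liftEdges (huv : u ≠ v) (he : G.ends e = s(u, v)) {K : Finset G.E}
    (heK : e ∉ K) (hK : G.IsTwoRegular K) :
    (G.subdivideOnce e u v).IsTwoRegular (liftEdges e u v K) := by
  rintro (z | ⟨⟩) hz
  · rw [degIn_liftEdges huv he heK] at hz ⊢
    exact hK z hz
  · rw [degIn_inr, card_inter_newEdges] at hz
    simp [liftEdges] at hz

lemma isTwoRegular_contractEdges (huv : u ≠ v) (he : G.ends e = s(u, v))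
    {K' : Finset (G.subdivideOnce e u v).E} (hK' : (G.subdivideOnce e u v).IsTwoRegular K') :
    G.IsTwoRegular (contractEdges e u v K') := fun z hz => by
  rw [degIn_contractEdges huv he (inr_mem_iff_of_isTwoRegular hK')] at hz ⊢
  exact hK' _ hz

lemma loopless_subdivideOnce (hl : G.Loopless) : (G.subdivideOnce e u v).Loopless := by
  rintro (⟨f, hf⟩ | _ | _) h
  · exact hl f ((Sym2.isDiag_map Sum.inl_injective).mp h)
  all_goals simp [IsLoop] at h

lemma card_edge_subdivideOnce :
    Fintype.card (G.subdivideOnce e u v).E = Fintype.card G.E + 1 := by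
  have : 0 < Fintype.card G.E := Fintype.card_pos_iff.mpr ⟨e⟩
  simp only [Fintype.card_sum, Fintype.card_bool, Fintype.card_subtype_compl,
    Fintype.card_subtype_eq]
  omega

lemma deg_subdivideOnce_inl (hl : G.Loopless) (huv : u ≠ v) (he : G.ends e = s(u, v))
    (z : G.V) : (G.subdivideOnce e u v).deg (Sum.inl z) = G.deg z := by
  rw [deg_eq_degIn_univ (loopless_subdivideOnce hl), ← degIn_contractEdges huv he (by simp) z,
    deg_eq_degIn_univ hl]
  congr 1
  ext f
  by_cases hf : f = e <;> simp [contractEdges, hf]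

lemma deg_subdivideOnce_inr (hl : G.Loopless) :
    (G.subdivideOnce e u v).deg (Sum.inr ()) = 2 := by
  rw [deg_eq_degIn_univ (loopless_subdivideOnce hl), degIn_inr, card_inter_newEdges]
  simp

lemma connected_subdivideOnce (hconn : G.Connected) (he : G.ends e = s(u, v)) :
    (G.subdivideOnce e u v).Connected := by
  set R := Relation.ReflTransGen (G.subdivideOnce e u v).Adj
  have hsymm : ∀ {p q}, R p q → R q p := fun h => Relation.reflTransGen_swap.mp <|
    Relation.ReflTransGen.mono (fun _ _ ⟨f, hf⟩ => ⟨f, hf.trans Sym2.eq_swap⟩) _ _ h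
  have hw : ∀ a ∈ G.ends e, R (Sum.inl a) (Sum.inr ()) := by
    intro a ha
    rw [he, Sym2.mem_iff] at ha
    rcases ha with rfl | rfl
    exacts [.single ⟨Sum.inr true, rfl⟩, .single ⟨Sum.inr false, rfl⟩]
  have hadj : ∀ a b, G.Adj a b → R (Sum.inl a) (Sum.inl b) := by
    rintro a b ⟨f, hf⟩
    by_cases hfe : f = e
    · subst hfe
      exact (hw a (hf ▸ Sym2.mem_mk_left _ _)).trans (hsymm (hw b (hf ▸ Sym2.mem_mk_right _ _)))
    · exact .single ⟨Sum.inl ⟨f, hfe⟩, by simp [hf]⟩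
  have hold : ∀ a b, R (Sum.inl a) (Sum.inl b) := fun a b =>
    Relation.ReflTransGen.lift' _ hadj _ _ (hconn a b)
  have hbase : ∀ p, R p (Sum.inl u) := by
    rintro (a | ⟨⟩)
    exacts [hold a u, hsymm (hw u (he ▸ Sym2.mem_mk_left _ _))]
  exact fun p q => (hbase p).trans (hsymm (hbase q))

/-- No cycle of the subdivided set runs through the new edges, so its cycles are those of `F`. -/
lemma add_one_le_nu2_subdivideOnce (hl : G.Loopless) (he : G.ends e = s(u, v))
    {F : Finset G.E} (hF : G.IsPathsAndEvenCycles F) (heF : e ∈ F)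
    (hacyc : ∀ K ⊆ F, G.IsTwoRegular K → e ∉ K) : #F + 1 ≤ (G.subdivideOnce e u v).nu2 := by
  have huv := ne_of_ends_eq (hl e) he
  set F' := liftEdges e u v (F.erase e) ∪ G.newEdges e u v
  have hF'N : F' ∩ G.newEdges e u v = G.newEdges e u v := inter_eq_right.mpr subset_union_right
  have hcontr : contractEdges e u v F' = F := by
    ext f
    by_cases hf : f = e
    · subst hf; simpa [F', contractEdges, newEdges] using heF
    · simp [F', contractEdges, liftEdges, newEdges, hf]
  have hcard : #F' = #F + 1 := by
    rw [card_eq_card_erase_contractEdges_add, hcontr, hF'N, card_erase_of_mem heF,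
      card_newEdges]
    have := card_pos.mpr ⟨e, heF⟩
    omega
  refine hcard ▸ IsPathsAndEvenCycles.card_le_nu2 (loopless_subdivideOnce hl) ⟨?_, ?_⟩
  · rintro (z | ⟨⟩)
    · rw [← degIn_contractEdges huv he (by simp [F', newEdges]), hcontr]
      exact hF.1 z
    · rw [degIn_inr, hF'N, card_newEdges]
  · intro K' hK' hreg
    have heK : e ∉ contractEdges e u v K' :=
      hacyc _ (hcontr ▸ contractEdges_mono hK') (isTwoRegular_contractEdges huv he hreg)
    have hN : #(K' ∩ G.newEdges e u v) = 0 := by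
      have := inr_mem_iff_of_isTwoRegular hreg
      simp only [self_mem_contractEdges] at heK
      rw [card_inter_newEdges]
      split_ifs <;> simp_all
    rw [card_eq_card_erase_contractEdges_add, hN, add_zero, erase_eq_of_notMem heK]
    exact hF.2 _ (hcontr ▸ contractEdges_mono hK') (isTwoRegular_contractEdges huv he hreg)

theorem nu2_subdivideOnce_le (hl : G.Loopless) (hconn : G.Connected) (hnc : ¬ ∀ v, G.deg v = 2)
    (hedge : ∀ f : G.E, ∀ a b : G.V, G.ends f = s(a, b) → ¬ (3 ≤ G.deg a ∧ 3 ≤ G.deg b))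
    (he : G.ends e = s(u, v)) : (G.subdivideOnce e u v).nu2 ≤ G.nu2 + 1 := by
  have huv := ne_of_ends_eq (hl e) he
  obtain ⟨F', hF', hcard⟩ := exists_isPathsAndEvenCycles_card_eq_nu2 (G := G.subdivideOnce e u v)
  have hsplit := card_eq_card_erase_contractEdges_add F'
  rw [card_inter_newEdges] at hsplit
  set F := contractEdges e u v F'
  have hev : ∀ K ⊆ F, G.IsTwoRegular K → e ∉ K → Even #K := fun K hK hreg heK =>
    card_liftEdges (u := u) (v := v) heK ▸
      hF'.2 _ (liftEdges_subset hK) (isTwoRegular_liftEdges huv he heK hreg)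
  by_cases hboth : Sum.inr true ∈ F' ∧ Sum.inr false ∈ F'
  · have heF : e ∈ F := self_mem_contractEdges.mpr hboth
    have hdeg : ∀ z, G.degIn F z ≤ 2 := fun z =>
      degIn_contractEdges huv he (iff_of_true hboth.1 hboth.2) z ▸ hF'.1 _
    obtain ⟨F₃, hF₃, -, -, hc⟩ :=
      exists_isPathsAndEvenCycles_not_on_cycle hl hconn hnc hedge hdeg hev heF
    have := hF₃.card_le_nu2 hl
    rw [card_erase_of_mem heF, if_pos hboth.1, if_pos hboth.2] at hsplit
    have := card_pos.mpr ⟨e, heF⟩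
    omega
  · have heF : e ∉ F := fun h => hboth (self_mem_contractEdges.mp h)
    have hF : G.IsPathsAndEvenCycles F := by
      refine ⟨fun z => ?_, fun K hK hreg => hev K hK hreg fun h => heF (hK h)⟩
      rw [← degIn_liftEdges (u := u) (v := v) huv he heF]
      exact (degIn_mono (liftEdges_subset subset_rfl) _).trans (hF'.1 _)
    have hN :
        (if Sum.inr true ∈ F' then 1 else 0) + (if Sum.inr false ∈ F' then 1 else 0) ≤ 1 := by
      by_cases h₁ : Sum.inr true ∈ F' <;> by_cases h₂ : Sum.inr false ∈ F' <;>
        simp [h₁, h₂] at hboth ⊢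
    have := hF.card_le_nu2 hl
    have := card_erase_le (s := F) (a := e)
    omega

/-- An endpoint of `e` of degree at most two meets at most one other edge of `F`; at the other
endpoint an edge of `F` is dropped if needed. -/
lemma exists_mem_subset_insert (hl : G.Loopless)
    (hedge : ∀ f : G.E, ∀ a b : G.V, G.ends f = s(a, b) → ¬ (3 ≤ G.deg a ∧ 3 ≤ G.deg b))
    (he : G.ends e = s(u, v)) {F : Finset G.E} (hdeg : ∀ z, G.degIn F z ≤ 2) :
    ∃ F₂ ⊆ insert e F, e ∈ F₂ ∧ (∀ z, G.degIn F₂ z ≤ 2) ∧ #F ≤ #F₂ := by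
  by_cases heF : e ∈ F
  · exact ⟨F, subset_insert e F, heF, hdeg, le_rfl⟩
  obtain ⟨a, b, hab, ha⟩ : ∃ a b, G.ends e = s(a, b) ∧ G.degIn F a ≤ 1 := by
    have h2 : G.deg u ≤ 2 ∨ G.deg v ≤ 2 := by have := hedge e u v he; omega
    rcases h2 with h | h
    · exact ⟨u, v, he, by have := degIn_lt_deg hl heF (he ▸ Sym2.mem_mk_left u v); omega⟩
    · exact ⟨v, u, he.trans Sym2.eq_swap,
        by have := degIn_lt_deg hl heF (he ▸ Sym2.mem_mk_right u v); omega⟩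
  have hmem : ∀ z, z ∈ G.ends e ↔ z = a ∨ z = b := fun z => by rw [hab, Sym2.mem_iff]
  by_cases hb : G.degIn F b ≤ 1
  · refine ⟨insert e F, subset_rfl, mem_insert_self e F, fun z => ?_,
      (card_insert_of_notMem heF).ge.trans' (Nat.le_succ _)⟩
    rw [degIn_insert heF]
    have := hdeg z
    split_ifs with hz
    · rcases (hmem z).mp hz with rfl | rfl <;> omega
    · omega
  obtain ⟨k, hkF, hbk⟩ := degIn_pos_iff.mp (show 0 < G.degIn F b by omega)
  have heF' : e ∉ F.erase k := fun h => heF (mem_of_mem_erase h)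
  refine ⟨insert e (F.erase k), insert_subset_insert e (erase_subset k F), mem_insert_self _ _,
    fun z => ?_, ?_⟩
  · rw [degIn_insert heF']
    have := degIn_erase hkF z
    have := hdeg z
    split_ifs at * with hz hkz
    · omega
    · rcases (hmem z).mp hz with rfl | rfl
      · omega
      · exact absurd hbk hkz
    all_goals omega
  · rw [card_insert_of_notMem heF', card_erase_add_one hkF]

theorem nu2_add_one_le_nu2_subdivideOnce (hl : G.Loopless) (hconn : G.Connected)
    (hnc : ¬ ∀ v, G.deg v = 2)
    (hedge : ∀ f : G.E, ∀ a b : G.V, G.ends f = s(a, b) → ¬ (3 ≤ G.deg a ∧ 3 ≤ G.deg b))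
    (he : G.ends e = s(u, v)) : G.nu2 + 1 ≤ (G.subdivideOnce e u v).nu2 := by
  obtain ⟨F, hF, hcard⟩ := exists_isPathsAndEvenCycles_card_eq_nu2 (G := G)
  obtain ⟨F₂, hF₂, heF₂, hdeg, hle⟩ := exists_mem_subset_insert hl hedge he hF.1
  have hev : ∀ K ⊆ F₂, G.IsTwoRegular K → e ∉ K → Even #K := fun K hK hreg heK =>
    hF.2 K (fun f hf => (mem_insert.mp (hF₂ (hK hf))).resolve_left (ne_of_mem_of_not_mem hf heK))
      hreg
  obtain ⟨F₃, hF₃, heF₃, hacyc, hc⟩ :=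
    exists_isPathsAndEvenCycles_not_on_cycle hl hconn hnc hedge hdeg hev heF₂
  have := add_one_le_nu2_subdivideOnce (u := u) (v := v) hl he hF₃ heF₃ hacyc
  omega

end Subdivision

theorem nu2_subdivideOnce_eq_general
    (G : Multigraph) (hloopless : G.Loopless) (hconn : G.Connected)
    (hnotEvenCycle : ¬ ((∀ v : G.V, G.deg v = 2) ∧ Even (Fintype.card G.E)))
    (hedge : ∀ f : G.E, ∀ a b : G.V, G.ends f = s(a, b) → ¬ (3 ≤ G.deg a ∧ 3 ≤ G.deg b))
    (e : G.E) (u v : G.V) (he : G.ends e = s(u, v)) :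
    (((∀ v : G.V, G.deg v = 2) ∧ Odd (Fintype.card G.E)) →
        (G.subdivideOnce e u v).nu2 = G.nu2 + 2) ∧
    (¬ ((∀ v : G.V, G.deg v = 2) ∧ Odd (Fintype.card G.E)) →
        (G.subdivideOnce e u v).nu2 = G.nu2 + 1) := by
  refine ⟨fun ⟨hdeg, hodd⟩ => ?_, fun hnotOdd => ?_⟩
  · have huv := ne_of_ends_eq (hloopless e) he
    have hdeg' : ∀ p, (G.subdivideOnce e u v).deg p = 2 := by
      rintro (z | ⟨⟩)
      exacts [(deg_subdivideOnce_inl hloopless huv he z).trans (hdeg z),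
        deg_subdivideOnce_inr hloopless]
    have hcard := card_edge_subdivideOnce (e := e) (u := u) (v := v)
    rw [nu2_eq_card_of_even (loopless_subdivideOnce hloopless) (connected_subdivideOnce hconn he)
      hdeg' (hcard ▸ hodd.add_one), hcard, ← nu2_add_one_eq_card_of_odd hloopless hconn hdeg hodd]
  · have hnc : ¬ ∀ v, G.deg v = 2 := fun h =>
      (Nat.even_or_odd _).elim (fun h' => hnotEvenCycle ⟨h, h'⟩) (fun h' => hnotOdd ⟨h, h'⟩)
    exact le_antisymm (nu2_subdivideOnce_le hloopless hconn hnc hedge he)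
      (nu2_add_one_le_nu2_subdivideOnce hloopless hconn hnc hedge he)

/-- Under the hypotheses of Statement 8, ν₂ increases by exactly 2 under a
single subdivision if G is an odd cycle, and by exactly 1 otherwise. -/
theorem nu2_subdivideOnce_eq
    (G : Multigraph) (hloopless : G.Loopless) (hconn : G.Connected)
    (hδ : ∀ v : G.V, 2 ≤ G.deg v)
    (hnotEvenCycle : ¬ ((∀ v : G.V, G.deg v = 2) ∧ Even (Fintype.card G.E)))
    (hedge : ∀ f : G.E, ∀ a b : G.V, G.ends f = s(a, b) → ¬ (3 ≤ G.deg a ∧ 3 ≤ G.deg b))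
    (e : G.E) (u v : G.V) (he : G.ends e = s(u, v)) :
    (((∀ v : G.V, G.deg v = 2) ∧ Odd (Fintype.card G.E)) →
        (G.subdivideOnce e u v).nu2 = G.nu2 + 2) ∧
    (¬ ((∀ v : G.V, G.deg v = 2) ∧ Odd (Fintype.card G.E)) →
        (G.subdivideOnce e u v).nu2 = G.nu2 + 1) :=
  nu2_subdivideOnce_eq_general G hloopless hconn hnotEvenCycle hedge e u v he

end Multigraph
end

section
/- Let G₀ be a connected cubic pseudo-graph without loops, and let G be obtained from G₀ by subdividing each edge e exactly k(e) times with k(e) ≥ 2 for all e. Then ν₂(G) ≥ (7/8)·|V(G)|. -/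
open Finset

section Incidence

variable {V E : Type} [Fintype E] [DecidableEq V] (fst snd : E → V)

def incident (v : V) : Finset E := {e | fst e = v ∨ snd e = v}

variable {fst snd}

lemma mem_incident {v : V} {e : E} : e ∈ incident fst snd v ↔ fst e = v ∨ snd e = v := by
  simp [incident]

lemma eq_or_eq_of_mem_incident {u v w : V} {e : E} (hv : e ∈ incident fst snd v)
    (hw : e ∈ incident fst snd w) (hu : e ∈ incident fst snd u) (hvw : v ≠ w) :
    u = v ∨ u = w := by
  simp only [mem_incident] at hv hw hu
  grind

lemma sum_card_incident [Fintype V] (hne : ∀ e, fst e ≠ snd e) :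
    ∑ v, #(incident fst snd v) = 2 * Fintype.card E := by
  have hends : ∀ e, #({v | fst e = v ∨ snd e = v} : Finset V) = 2 := fun e => by
    rw [← card_pair (hne e)]
    congr 1
    ext v
    simp [eq_comm]
  have := sum_card_bipartiteAbove_eq_sum_card_bipartiteBelow (s := (univ : Finset V))
    (t := (univ : Finset E)) (r := fun v e => fst e = v ∨ snd e = v)
  simp only [bipartiteAbove, bipartiteBelow] at this
  simp only [incident, this, hends, sum_const, card_univ, smul_eq_mul, mul_comm]

end Incidence

section Forest

variable {V E : Type} [Fintype E] [DecidableEq E] [DecidableEq V] {fst snd : E → V}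

variable (fst snd) in
-- Acyclicity, phrased through the leaves that the peeling argument needs.
def IsForest (F : Finset E) : Prop :=
  ∀ F' ⊆ F, F'.Nonempty → ∃ v, #(F' ∩ incident fst snd v) = 1

lemma isForest_empty : IsForest fst snd ∅ := fun F' hF' hne => by
  simp [subset_empty.mp hF'] at hne

lemma IsForest.insert {F : Finset E} (hF : IsForest fst snd F) {v : V} {e : E}
    (he : e ∈ incident fst snd v) (hv : Disjoint F (incident fst snd v)) :
    IsForest fst snd (insert e F) := by
  intro F' hF' hne
  by_cases heF' : e ∈ F'
  · refine ⟨v, card_eq_one.mpr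
      ⟨e, eq_singleton_iff_unique_mem.mpr ⟨mem_inter.mpr ⟨heF', he⟩, ?_⟩⟩⟩
    intro f hf
    obtain ⟨hfF', hfv⟩ := mem_inter.mp hf
    rcases mem_insert.mp (hF' hfF') with rfl | hfF
    · rfl
    · exact absurd hfv (disjoint_left.mp hv hfF)
  · exact hF F' (fun f hf => (mem_insert.mp (hF' hf)).resolve_left (by rintro rfl; exact heF' hf))
      hne

lemma exists_spanning_isForest [Fintype V] (hinc : ∀ v, (incident fst snd v).Nonempty) :
    ∃ F, IsForest fst snd F ∧ ∀ v, (F ∩ incident fst snd v).Nonempty := by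
  classical
  obtain ⟨F, hF, hmax⟩ := exists_max_image ({F | IsForest fst snd F} : Finset (Finset E)) card
    ⟨∅, by simp [isForest_empty]⟩
  rw [mem_filter_univ] at hF
  refine ⟨F, hF, fun v => ?_⟩
  by_contra hv
  rw [not_nonempty_iff_eq_empty, ← disjoint_iff_inter_eq_empty] at hv
  obtain ⟨e, he⟩ := hinc v
  have heF : e ∉ F := fun h => disjoint_left.mp hv h he
  have := hmax _ (by simpa using hF.insert he hv)
  rw [card_insert_of_notMem heF] at this
  omega

end Forest

section Hall

variable {V E : Type} [Fintype E] [DecidableEq E] [DecidableEq V] {fst snd : E → V}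

/-- Hall's condition holds because every edge outside a spanning forest has two endpoints,
each of which carries at most two such edges. -/
lemma exists_injective_endpoint_of_spanning (hne : ∀ e, fst e ≠ snd e)
    (hdeg : ∀ v, #(incident fst snd v) ≤ 3) {F : Finset E}
    (hF : ∀ v, (F ∩ incident fst snd v).Nonempty) :
    ∃ f : {e // e ∉ F} → V, Function.Injective f ∧ ∀ e, e.1 ∈ incident fst snd (f e) := by
  let ends : {e // e ∉ F} → Finset V := fun e => {fst e.1, snd e.1}
  have hall : ∀ s : Finset {e // e ∉ F}, #s ≤ #(s.biUnion ends) := by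
    intro s
    have hcount := card_mul_le_card_mul (s := s) (t := s.biUnion ends) (m := 2) (n := 2)
      (r := fun e v => v ∈ ends e) (fun e he => ?_) (fun v _ => ?_)
    · omega
    · rw [← card_pair (hne e.1)]
      refine card_le_card fun v hv => (mem_bipartiteAbove _).mpr ⟨mem_biUnion.mpr ⟨e, he, hv⟩, hv⟩
    · obtain ⟨f, hf⟩ := hF v
      have hsplit := card_filter_add_card_filter_not (s := incident fst snd v) (· ∈ F)
      have hinF : 0 < #{e ∈ incident fst snd v | e ∈ F} :=
        card_pos.mpr ⟨f, by simpa [and_comm] using hf⟩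
      have hbelow : #(s.bipartiteBelow (fun e v => v ∈ ends e) v) ≤
          #{e ∈ incident fst snd v | e ∉ F} := by
        refine card_le_card_of_injOn Subtype.val (fun e he => ?_) Subtype.val_injective.injOn
        obtain ⟨-, hv⟩ := (mem_bipartiteBelow _).mp he
        simp only [ends, mem_insert, mem_singleton] at hv
        simp only [coe_filter, Set.mem_ofPred_eq, mem_incident]
        exact ⟨by grind, e.2⟩
      have := hdeg v
      omega
  obtain ⟨f, hinj, hf⟩ := (all_card_le_biUnion_card_iff_exists_injective ends).mp hall
  refine ⟨f, hinj, fun e => mem_incident.mpr ?_⟩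
  have := hf e
  simp only [ends, mem_insert, mem_singleton] at this
  grind

end Hall

section Peeling

variable {ι κ : Type} [DecidableEq ι] [DecidableEq κ]

def Peelable (J : ι → Finset κ) : Prop :=
  ∀ W : Finset ι, W.Nonempty → ∃ v ∈ W, ∃ e ∈ J v, ∀ w ∈ W, w ≠ v → e ∉ J w

/-- Solve the system without a member `v` that owns a private element `e`, then fix the equation
of `v` through `x e`. -/
lemma Peelable.exists_sum_eq [Fintype ι] {R : Type} [AddCommGroup R] {J : ι → Finset κ}
    (hJ : Peelable J) (d : ι → R) : ∃ x : κ → R, ∀ v, ∑ e ∈ J v, x e = d v := by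
  suffices ∀ W : Finset ι, ∃ x : κ → R, ∀ v ∈ W, ∑ e ∈ J v, x e = d v by
    simpa using this univ
  intro W
  induction W using Finset.strongInduction with
  | H W ih =>
    obtain rfl | hW := W.eq_empty_or_nonempty
    · exact ⟨0, by simp⟩
    obtain ⟨v, hv, e, he, hprivate⟩ := hJ W hW
    obtain ⟨x, hx⟩ := ih (W.erase v) (erase_ssubset hv)
    have hrest : ∀ b, ∑ f ∈ (J v).erase e, Function.update x e b f = ∑ f ∈ (J v).erase e, x f :=
      fun b => sum_congr rfl fun f hf => Function.update_of_ne (ne_of_mem_erase hf) _ _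
    refine ⟨Function.update x e (d v - ∑ f ∈ (J v).erase e, x f), fun w hw => ?_⟩
    by_cases hwv : w = v
    · subst hwv
      rw [← add_sum_erase _ _ he, hrest, Function.update_self, sub_add_cancel]
    · rw [← hx w (mem_erase.mpr ⟨hwv, hw⟩)]
      exact sum_congr rfl fun f hf =>
        Function.update_of_ne (by rintro rfl; exact hprivate w hw hwv hf) _ _

end Peeling

section Skip

variable {V E : Type} [Fintype E] [DecidableEq E] [DecidableEq V] {fst snd : E → V}

lemma mem_of_mem_erase_skip_of_ne {F : Finset E} {skip : V → E}
    (hskip : ∀ e ∉ F, skip (fst e) = e ∨ skip (snd e) = e) {e : E} {v w : V}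
    (hv : e ∈ (incident fst snd v).erase (skip v)) (hw : e ∈ (incident fst snd w).erase (skip w))
    (hvw : v ≠ w) : e ∈ F := by
  by_contra heF
  have hend : ∀ u, skip u = e → e ∈ incident fst snd u → False := fun u hu he => by
    rcases eq_or_eq_of_mem_incident (mem_of_mem_erase hv) (mem_of_mem_erase hw) he hvw
      with rfl | rfl
    · exact ne_of_mem_erase hv hu.symm
    · exact ne_of_mem_erase hw hu.symm
  rcases hskip e heF with h | h
  · exact hend _ h (mem_incident.mpr (.inl rfl))
  · exact hend _ h (mem_incident.mpr (.inr rfl))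

/-- Only forest edges can be shared by two of the sets, and a leaf of the shared edges would
own a private edge. -/
lemma peelable_erase_skip (hdeg : ∀ v, 3 ≤ #(incident fst snd v)) {F : Finset E}
    (hF : IsForest fst snd F) {skip : V → E}
    (hskip : ∀ e ∉ F, skip (fst e) = e ∨ skip (snd e) = e) :
    Peelable fun v => (incident fst snd v).erase (skip v) := by
  set J := fun v => (incident fst snd v).erase (skip v)
  have hJ : ∀ v, 2 ≤ #(J v) := fun v => by
    have := hdeg v
    have : #(incident fst snd v) - 1 ≤ #(J v) := pred_card_le_card_erase
    omega
  intro W hW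
  by_contra! hcon
  have hS : W.biUnion J ⊆ F := fun e he => by
    obtain ⟨v, hv, heJ⟩ := mem_biUnion.mp he
    obtain ⟨w, hw, hwv, heJw⟩ := hcon v hv e heJ
    exact mem_of_mem_erase_skip_of_ne hskip heJ heJw (Ne.symm hwv)
  obtain ⟨v₀, hv₀⟩ := hW
  obtain ⟨e₀, he₀⟩ := card_pos.mp (by have := hJ v₀; omega : 0 < #(J v₀))
  obtain ⟨u, hu⟩ := hF _ hS ⟨e₀, mem_biUnion.mpr ⟨v₀, hv₀, he₀⟩⟩
  obtain ⟨e, he⟩ := card_eq_one.mp hu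
  have huW : u ∈ W := by
    obtain ⟨heS, heu⟩ := mem_inter.mp (he ▸ mem_singleton_self e)
    obtain ⟨v, hv, heJ⟩ := mem_biUnion.mp heS
    obtain ⟨w, hw, hwv, heJw⟩ := hcon v hv e heJ
    rcases eq_or_eq_of_mem_incident (mem_of_mem_erase heJ) (mem_of_mem_erase heJw) heu
      (Ne.symm hwv) with rfl | rfl <;> assumption
  have hJu : J u ⊆ W.biUnion J ∩ incident fst snd u := fun f hf =>
    mem_inter.mpr ⟨mem_biUnion.mpr ⟨u, huW, hf⟩, mem_of_mem_erase hf⟩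
  have := card_le_card hJu
  have := hJ u
  omega

lemma exists_skip_peelable [Fintype V] (hne : ∀ e, fst e ≠ snd e)
    (hdeg : ∀ v, #(incident fst snd v) = 3) :
    ∃ skip : V → E, (∀ v, skip v ∈ incident fst snd v) ∧
      Peelable fun v => (incident fst snd v).erase (skip v) := by
  have hinc : ∀ v, (incident fst snd v).Nonempty := fun v => card_pos.mp (by rw [hdeg v]; omega)
  obtain ⟨F, hF, hspan⟩ := exists_spanning_isForest hinc
  obtain ⟨f, hf, hfinc⟩ := exists_injective_endpoint_of_spanning hne (fun v => (hdeg v).le) hspan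
  choose other hother using hinc
  refine ⟨Function.extend f Subtype.val other, fun v => ?_,
    peelable_erase_skip (fun v => (hdeg v).ge) hF fun e he => ?_⟩
  · by_cases hv : ∃ e, f e = v
    · obtain ⟨e, rfl⟩ := hv
      rw [hf.extend_apply]
      exact hfinc e
    · rw [Function.extend_apply' _ _ _ hv]
      exact hother v
  · have hskip := hf.extend_apply Subtype.val other ⟨e, he⟩
    rcases mem_incident.mp (hfinc ⟨e, he⟩) with h | h <;> rw [← h] at hskip
    exacts [.inl hskip, .inr hskip]

end Skip

namespace Multigraph

lemma card_colored_le_nu2 (G : Multigraph) (hloop : ∀ e, ¬ G.IsLoop e)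
    (c : G.E → Option (ZMod 2))
    (hc : ∀ e f, e ≠ f → ∀ v ∈ G.ends e, v ∈ G.ends f → c e = c f → c e = none) :
    #{e | c e ≠ none} ≤ G.nu2 := by
  let H : ZMod 2 → Finset G.E := fun a => {e | c e = some a}
  have hmatch : ∀ a, G.IsMatching (H a) := fun a =>
    ⟨fun e _ => hloop e, fun e he f hf hef v hve hvf => by
      simp only [H, mem_filter_univ] at he hf
      simpa [he] using hc e f hef v hve hvf (he.trans hf.symm)⟩
  have hdisj : Disjoint (H 0) (H 1) := by
    simp +contextual [H, disjoint_left]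
  have hcard : #(H 0) + #(H 1) = #{e | c e ≠ none} := by
    rw [← card_union_of_disjoint hdisj]
    congr 1
    ext e
    simp only [H, mem_union, mem_filter_univ]
    rcases c e with _ | a
    · simp
    · fin_cases a <;> decide
  refine hcard ▸ le_csSup ⟨2 * Fintype.card G.E, ?_⟩ ⟨H 0, H 1, hmatch 0, hmatch 1, hdisj, rfl⟩
  rintro m ⟨A, B, -, -, -, rfl⟩
  have := card_le_univ A
  have := card_le_univ B
  omega

section Subdivision

variable {G₀ : Multigraph} {fst snd : G₀.E → G₀.V} {k : G₀.E → ℕ}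

lemma mem_subdivide_ends {w : (G₀.subdivide fst snd k).V} {e : G₀.E} {i : Fin (k e + 1)} :
    w ∈ (G₀.subdivide fst snd k).ends ⟨e, i⟩ ↔
      w = (if _ : i.val = 0 then .inl (fst e) else .inr ⟨e, ⟨i.val - 1, by omega⟩⟩) ∨
      w = (if _ : i.val = k e then .inl (snd e) else .inr ⟨e, ⟨i.val, by omega⟩⟩) :=
  Sym2.mem_iff

lemma inl_mem_subdivide_ends {u : G₀.V} {e : G₀.E} {i : Fin (k e + 1)} :
    (Sum.inl u : (G₀.subdivide fst snd k).V) ∈ (G₀.subdivide fst snd k).ends ⟨e, i⟩ ↔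
      (i.val = 0 ∧ fst e = u) ∨ (i.val = k e ∧ snd e = u) := by
  refine mem_subdivide_ends.trans ?_
  split_ifs <;> grind

lemma inr_eq_inr_iff {e₀ e : G₀.E} {j : Fin (k e₀)} {m : ℕ} (hm : m < k e) :
    (Sum.inr ⟨e₀, j⟩ : G₀.V ⊕ Σ e, Fin (k e)) = .inr ⟨e, ⟨m, hm⟩⟩ ↔ e₀ = e ∧ j.val = m := by
  constructor
  · intro h
    cases h
    simp
  · rintro ⟨rfl, rfl⟩
    rfl

lemma inr_mem_subdivide_ends {e₀ e : G₀.E} {j : Fin (k e₀)} {i : Fin (k e + 1)} :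
    (Sum.inr ⟨e₀, j⟩ : (G₀.subdivide fst snd k).V) ∈ (G₀.subdivide fst snd k).ends ⟨e, i⟩ ↔
      e₀ = e ∧ (i.val = j.val ∨ i.val = j.val + 1) := by
  refine mem_subdivide_ends.trans ?_
  grind [inr_eq_inr_iff]

lemma subdivide_not_isLoop (hne : ∀ e, fst e ≠ snd e) (f : (G₀.subdivide fst snd k).E) :
    ¬ (G₀.subdivide fst snd k).IsLoop f := by
  obtain ⟨e, i⟩ := f
  intro h
  have := Sym2.mk_isDiag_iff.mp h
  simp only at this
  split_ifs at this <;> grind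

end Subdivision

section PathColoring

variable {G₀ : Multigraph} {fst snd : G₀.E → G₀.V} {k : G₀.E → ℕ}

variable (fst snd k) in
def pathColoring (skip : G₀.V → G₀.E) (x : G₀.E → ZMod 2) (f : (G₀.subdivide fst snd k).E) :
    Option (ZMod 2) :=
  if (f.2.val = 0 ∧ skip (fst f.1) = f.1) ∨ (f.2.val = k f.1 ∧ skip (snd f.1) = f.1) then none
  else some (x f.1 + f.2.val)

variable {skip : G₀.V → G₀.E} {x : G₀.E → ZMod 2}

lemma pathColoring_eq_some {f : (G₀.subdivide fst snd k).E}
    (hf : pathColoring fst snd k skip x f ≠ none) :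
    pathColoring fst snd k skip x f = some (x f.1 + f.2.val) := by
  unfold pathColoring at hf ⊢
  split_ifs at hf ⊢ <;> simp_all

lemma pathColoring_of_inl_mem (hne : ∀ e, fst e ≠ snd e) {v : G₀.V} {e : G₀.E}
    {i : Fin (k e + 1)}
    (hv : (Sum.inl v : (G₀.subdivide fst snd k).V) ∈ (G₀.subdivide fst snd k).ends ⟨e, i⟩)
    (hf : pathColoring fst snd k skip x ⟨e, i⟩ ≠ none) :
    e ∈ (incident fst snd v).erase (skip v) ∧
      pathColoring fst snd k skip x ⟨e, i⟩ =
        some (x e + if fst e = v then 0 else (k e : ZMod 2)) := by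
  rw [pathColoring_eq_some hf]
  unfold pathColoring at hf
  have := hne e
  rcases inl_mem_subdivide_ends.mp hv with ⟨h0, rfl⟩ | ⟨hk, rfl⟩
  · simp_all [mem_incident, eq_comm]
  · simp_all [mem_incident, eq_comm]

lemma pathColoring_proper (hne : ∀ e, fst e ≠ snd e) (hdeg : ∀ v, #(incident fst snd v) ≤ 3)
    (hskip : ∀ v, skip v ∈ incident fst snd v)
    (hx : ∀ v, ∑ e ∈ (incident fst snd v).erase (skip v),
      (x e + if fst e = v then 0 else (k e : ZMod 2)) = 1)
    (f f' : (G₀.subdivide fst snd k).E) (hff' : f ≠ f') (w : (G₀.subdivide fst snd k).V)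
    (hw : w ∈ (G₀.subdivide fst snd k).ends f) (hw' : w ∈ (G₀.subdivide fst snd k).ends f')
    (heq : pathColoring fst snd k skip x f = pathColoring fst snd k skip x f') :
    pathColoring fst snd k skip x f = none := by
  by_contra hf
  have hf' : pathColoring fst snd k skip x f' ≠ none := heq ▸ hf
  obtain ⟨e, i⟩ := f
  obtain ⟨e', i'⟩ := f'
  rcases w with v | ⟨e₀, j⟩
  · obtain ⟨hJ, hcol⟩ := pathColoring_of_inl_mem hne hw hf
    obtain ⟨hJ', hcol'⟩ := pathColoring_of_inl_mem hne hw' hf'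
    by_cases hee : e = e'
    · subst hee
      have := hne e
      have := inl_mem_subdivide_ends.mp hw
      have := inl_mem_subdivide_ends.mp hw'
      exact hff' (by grind)
    · have hpair : {e, e'} = (incident fst snd v).erase (skip v) := by
        refine eq_of_subset_of_card_le (insert_subset_iff.mpr ⟨hJ, by simpa using hJ'⟩) ?_
        rw [card_erase_of_mem (hskip v), card_pair hee]
        have := hdeg v
        omega
      have hsame := Option.some_inj.mp (hcol.symm.trans (heq.trans hcol'))
      have hsum := hx v
      rw [← hpair, sum_pair hee, hsame, CharTwo.add_self_eq_zero] at hsum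
      exact zero_ne_one hsum
  · obtain ⟨rfl, hi⟩ := inr_mem_subdivide_ends.mp hw
    obtain ⟨rfl, hi'⟩ := inr_mem_subdivide_ends.mp hw'
    have hii' : i.val ≠ i'.val := fun h => hff' (by rw [Fin.ext h])
    rw [pathColoring_eq_some hf, pathColoring_eq_some hf', Option.some_inj, add_right_inj,
      ZMod.natCast_eq_natCast_iff'] at heq
    dsimp only at heq
    omega

lemma card_pathColoring_eq_none_le (hne : ∀ e, fst e ≠ snd e) :
    #{f | pathColoring fst snd k skip x f = none} ≤ Fintype.card G₀.V := by
  let g : G₀.V → (G₀.subdivide fst snd k).E := fun v =>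
    ⟨skip v, if fst (skip v) = v then 0 else Fin.last _⟩
  refine (card_le_card fun f hf => ?_).trans (card_image_le (s := univ) (f := g))
  rw [mem_filter_univ] at hf
  obtain ⟨e, i⟩ := f
  unfold pathColoring at hf
  simp only [ite_eq_left_iff, reduceCtorEq, imp_false, not_not] at hf
  rcases hf with ⟨h0, hs⟩ | ⟨hk, hs⟩
  · refine mem_image.mpr ⟨fst e, mem_univ _, ?_⟩
    simp only [g]
    rw [hs, if_pos rfl]
    exact congrArg _ (Fin.ext h0.symm)
  · refine mem_image.mpr ⟨snd e, mem_univ _, ?_⟩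
    simp only [g]
    rw [hs, if_neg (hne e)]
    exact congrArg _ (Fin.ext hk.symm)

lemma card_subdivide_E_le_nu2_add (hne : ∀ e, fst e ≠ snd e)
    (hdeg : ∀ v, #(incident fst snd v) = 3) :
    Fintype.card (G₀.subdivide fst snd k).E ≤
      (G₀.subdivide fst snd k).nu2 + Fintype.card G₀.V := by
  obtain ⟨skip, hskip, hpeel⟩ := exists_skip_peelable hne hdeg
  let offset : G₀.V → G₀.E → ZMod 2 := fun v e => if fst e = v then 0 else k e
  obtain ⟨x, hx⟩ := hpeel.exists_sum_eq fun v =>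
    1 - ∑ e ∈ (incident fst snd v).erase (skip v), offset v e
  have hproper := pathColoring_proper (k := k) hne (fun v => (hdeg v).le) hskip
    fun v => by rw [sum_add_distrib, hx, sub_add_cancel]
  have hcolored := card_colored_le_nu2 _ (subdivide_not_isLoop hne) _ hproper
  have hnone := card_pathColoring_eq_none_le (k := k) (skip := skip) (x := x) hne
  have hsplit := card_filter_add_card_filter_not (s := univ)
    (fun f => pathColoring fst snd k skip x f = none)
  rw [card_univ] at hsplit
  simp only [ne_eq] at hcolored
  omega

end PathColoring

variable {G₀ : Multigraph} {fst snd : G₀.E → G₀.V}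

lemma card_subdivide_V (k : G₀.E → ℕ) :
    Fintype.card (G₀.subdivide fst snd k).V = Fintype.card G₀.V + ∑ e, k e := by
  simp [subdivide, Fintype.card_sum, Fintype.card_sigma]

lemma card_subdivide_E (k : G₀.E → ℕ) :
    Fintype.card (G₀.subdivide fst snd k).E = Fintype.card G₀.E + ∑ e, k e := by
  simp [subdivide, Fintype.card_sigma, sum_add_distrib, add_comm]

lemma fst_ne_snd (hends : ∀ e, G₀.ends e = s(fst e, snd e)) (hloopless : G₀.Loopless)
    (e : G₀.E) : fst e ≠ snd e := fun h =>
  hloopless e (by rw [IsLoop, hends e, Sym2.mk_isDiag_iff]; exact h)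

lemma card_incident_eq_deg (hends : ∀ e, G₀.ends e = s(fst e, snd e))
    (hloopless : G₀.Loopless) (v : G₀.V) : #(incident fst snd v) = G₀.deg v := by
  rw [deg, incident, card_filter]
  refine sum_congr rfl fun e _ => ?_
  have hdiag : G₀.ends e ≠ Sym2.diag v := fun h =>
    hloopless e (by rw [IsLoop, h]; exact Sym2.diag_isDiag v)
  rw [if_neg hdiag, hends e]
  simp [eq_comm]

theorem nu2_subdivide_ge_seven_eighths_general
    (G₀ : Multigraph) (fst snd : G₀.E → G₀.V)
    (hends : ∀ e : G₀.E, G₀.ends e = s(fst e, snd e))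
    (hloopless : G₀.Loopless)
    (hcubic : ∀ v : G₀.V, G₀.deg v = 3)
    (k : G₀.E → ℕ) (hk : ∀ e : G₀.E, 2 ≤ k e) :
    8 * (G₀.subdivide fst snd k).nu2 ≥ 7 * Fintype.card (G₀.subdivide fst snd k).V := by
  have hne := fst_ne_snd hends hloopless
  have hdeg v : #(incident fst snd v) = 3 :=
    (card_incident_eq_deg hends hloopless v).trans (hcubic v)
  have hhandshake : 3 * Fintype.card G₀.V = 2 * Fintype.card G₀.E := by
    simpa [hdeg, mul_comm] using sum_card_incident hne
  have hsum : 2 * Fintype.card G₀.E ≤ ∑ e, k e := by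
    simpa [mul_comm] using sum_le_sum fun e (_ : e ∈ univ) => hk e
  have hcolored := card_subdivide_E_le_nu2_add (k := k) hne hdeg
  rw [card_subdivide_E] at hcolored
  rw [card_subdivide_V]
  omega

/-- If G is obtained from a connected loopless cubic pseudo-graph G₀ by
subdividing each edge e exactly k(e) ≥ 2 times, then ν₂(G) ≥ (7/8)·|V(G)|. -/
theorem nu2_subdivide_ge_seven_eighths
    (G₀ : Multigraph) (fst snd : G₀.E → G₀.V)
    (hends : ∀ e : G₀.E, G₀.ends e = s(fst e, snd e))
    (hloopless : G₀.Loopless) (hconn : G₀.Connected)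
    (hcubic : ∀ v : G₀.V, G₀.deg v = 3)
    (k : G₀.E → ℕ) (hk : ∀ e : G₀.E, 2 ≤ k e) :
    8 * (G₀.subdivide fst snd k).nu2 ≥ 7 * Fintype.card (G₀.subdivide fst snd k).V :=
  nu2_subdivide_ge_seven_eighths_general G₀ fst snd hends hloopless hcubic k hk

end Multigraph
end

section
/- Every cubic graph G satisfies ν₁(G) ≥ (2/5)·|V(G)|, i.e., G has a matching covering at least 4/5 of its vertices. -/
namespace Multigraph

section NuOneProof

variable (G : Multigraph)

def supp (e : G.E) : Finset G.V :=
  Sym2.lift ⟨fun a b => {a, b}, fun a b => Finset.pair_comm a b⟩ (G.ends e)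


lemma mem_supp {v : G.V} {e : G.E} : v ∈ G.supp e ↔ v ∈ G.ends e := by
  unfold supp
  induction (G.ends e) using Sym2.inductionOn with
  | _ a b => simp [Sym2.mem_iff]

lemma exists_ends (hl : G.Loopless) (e : G.E) :
    ∃ a b : G.V, a ≠ b ∧ G.ends e = s(a, b) := by
  have h := hl e
  unfold IsLoop at h
  obtain ⟨⟨a, b⟩, h2⟩ := Quot.exists_rep (G.ends e)
  refine ⟨a, b, ?_, h2.symm⟩
  intro hab
  apply h
  rw [← h2, Sym2.isDiag_iff_proj_eq]
  exact hab

lemma exists_supp (hl : G.Loopless) (e : G.E) :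
    ∃ a b : G.V, a ≠ b ∧ G.supp e = {a, b} := by
  obtain ⟨a, b, hab, h⟩ := G.exists_ends hl e
  refine ⟨a, b, hab, ?_⟩
  unfold supp
  rw [h]
  simp

lemma supp_card (hl : G.Loopless) (e : G.E) : (G.supp e).card = 2 := by
  obtain ⟨a, b, hab, h⟩ := G.exists_supp hl e
  rw [h, Finset.card_pair hab]

def incident (v : G.V) : Finset G.E := Finset.univ.filter (fun e => v ∈ G.supp e)

lemma deg_eq_card_incident (hl : G.Loopless) (v : G.V) :
    G.deg v = (G.incident v).card := by
  unfold deg incident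
  rw [Finset.card_filter]
  apply Finset.sum_congr rfl
  intro e _
  have hne : G.ends e ≠ Sym2.diag v := by
    intro h
    apply hl e
    unfold IsLoop
    rw [h]
    exact Sym2.diag_isDiag v
  rw [if_neg hne]
  by_cases hv : v ∈ G.ends e
  · rw [if_pos hv, if_pos (G.mem_supp.2 hv)]
  · rw [if_neg hv, if_neg (fun h => hv (G.mem_supp.1 h))]

variable {G}

/-- alive edges: both endpoints in A -/
def aliveE (A : Finset G.V) : Finset G.E := Finset.univ.filter (fun e => G.supp e ⊆ A)

lemma mem_aliveE {A : Finset G.V} {e : G.E} : e ∈ aliveE A ↔ G.supp e ⊆ A := by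
  unfold aliveE; simp

lemma aliveE_mono {A B : Finset G.V} (h : A ⊆ B) : aliveE A ⊆ aliveE B := by
  intro e he
  rw [mem_aliveE] at *
  exact he.trans h

/-- matching inside alive set A -/
def isM (A : Finset G.V) (M : Finset G.E) : Prop :=
  M ⊆ aliveE A ∧ ∀ e ∈ M, ∀ f ∈ M, e ≠ f → Disjoint (G.supp e) (G.supp f)

lemma isM_mono {A B : Finset G.V} {M : Finset G.E} (h : A ⊆ B) (hM : isM A M) : isM B M :=
  ⟨hM.1.trans (aliveE_mono h), hM.2⟩

lemma isM_subset {A : Finset G.V} {M M' : Finset G.E} (h : M' ⊆ M) (hM : isM A M) : isM A M' :=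
  ⟨h.trans hM.1, fun e he f hf => hM.2 e (h he) f (h hf)⟩

def cover (M : Finset G.E) : Finset G.V := M.biUnion G.supp

lemma cover_mono {M M' : Finset G.E} (h : M ⊆ M') : cover M ⊆ cover M' :=
  Finset.biUnion_subset_biUnion_of_subset_left _ h

lemma mem_cover {M : Finset G.E} {v : G.V} : v ∈ cover M ↔ ∃ e ∈ M, v ∈ G.supp e :=
  Finset.mem_biUnion

lemma cover_subset {A : Finset G.V} {M : Finset G.E} (hM : isM A M) : cover M ⊆ A := by
  intro v hv
  rw [mem_cover] at hv
  obtain ⟨e, he, hve⟩ := hv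
  exact mem_aliveE.1 (hM.1 he) hve

/-- unique matching edge at a covered vertex -/
lemma matching_unique {A : Finset G.V} {M : Finset G.E} (hM : isM A M)
    {e f : G.E} {v : G.V} (he : e ∈ M) (hf : f ∈ M)
    (hve : v ∈ G.supp e) (hvf : v ∈ G.supp f) : e = f := by
  by_contra h
  exact Finset.disjoint_left.1 (hM.2 e he f hf h) hve hvf

lemma card_cover (hl : G.Loopless) {A : Finset G.V} {M : Finset G.E} (hM : isM A M) :
    (cover M).card = 2 * M.card := by
  unfold cover
  rw [Finset.card_biUnion (fun e he f hf hef => hM.2 e he f hf hef)]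
  rw [Finset.sum_congr rfl (fun e _ => G.supp_card hl e)]
  rw [Finset.sum_const, smul_eq_mul, mul_comm]

/-- the set of matching sizes -/
noncomputable def nuA (A : Finset G.V) : ℕ := sSup {m | ∃ M : Finset G.E, isM A M ∧ M.card = m}

lemma isM_empty (A : Finset G.V) : isM A (∅ : Finset G.E) :=
  ⟨Finset.empty_subset _, by simp⟩

lemma nuA_spec (A : Finset G.V) : ∃ M : Finset G.E, isM A M ∧ M.card = nuA A := by
  have h : nuA A ∈ {m | ∃ M : Finset G.E, isM A M ∧ M.card = m} := by
    apply Nat.sSup_mem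
    · exact ⟨0, ∅, isM_empty A, by simp⟩
    · exact ⟨Fintype.card G.E, fun m ⟨M, _, hc⟩ => hc ▸ (Finset.card_le_univ M).trans (by simp)⟩
  exact h

lemma le_nuA {A : Finset G.V} {M : Finset G.E} (h : isM A M) : M.card ≤ nuA A := by
  apply le_csSup
  · exact ⟨Fintype.card G.E, fun m ⟨M, _, hc⟩ => hc ▸ (Finset.card_le_univ M).trans (by simp)⟩
  · exact ⟨M, h, rfl⟩

lemma nuA_mono {A B : Finset G.V} (h : A ⊆ B) : nuA A ≤ nuA B := by
  obtain ⟨M, hM, hc⟩ := nuA_spec A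
  exact hc ▸ le_nuA (isM_mono h hM)

lemma two_nuA_le (hl : G.Loopless) (A : Finset G.V) : 2 * nuA A ≤ A.card := by
  obtain ⟨M, hM, hc⟩ := nuA_spec A
  rw [← hc, ← card_cover hl hM]
  exact Finset.card_le_card (cover_subset hM)

lemma nuA_erase_le (A : Finset G.V) (v : G.V) : nuA (A.erase v) ≤ nuA A :=
  nuA_mono (Finset.erase_subset v A)

lemma nuA_le_erase (A : Finset G.V) (v : G.V) : nuA A ≤ nuA (A.erase v) + 1 := by
  obtain ⟨M, hM, hc⟩ := nuA_spec A
  set Mv := M.filter (fun e => v ∈ G.supp e) with hMv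
  have hMvcard : Mv.card ≤ 1 := by
    rw [Finset.card_le_one]
    intro e he f hf
    rw [hMv, Finset.mem_filter] at he hf
    exact matching_unique hM he.1 hf.1 he.2 hf.2
  have h1 : isM (A.erase v) (M \ Mv) := by
    constructor
    · intro e he
      rw [Finset.mem_sdiff, hMv, Finset.mem_filter] at he
      rw [mem_aliveE]
      intro u hu
      rw [Finset.mem_erase]
      refine ⟨?_, mem_aliveE.1 (hM.1 he.1) hu⟩
      intro huv
      exact he.2 ⟨he.1, huv ▸ hu⟩
    · intro e he f hf hef
      rw [Finset.mem_sdiff] at he hf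
      exact hM.2 e he.1 f hf.1 hef
  calc nuA A = M.card := hc.symm
    _ ≤ (M \ Mv).card + Mv.card := by
        have hsub : Mv ⊆ M := by rw [hMv]; exact Finset.filter_subset _ _
        rw [Finset.card_sdiff_of_subset hsub, Nat.sub_add_cancel (Finset.card_le_card hsub)]
    _ ≤ nuA (A.erase v) + 1 := Nat.add_le_add (le_nuA h1) hMvcard

/-! ### weights and RHS -/

def wt (d : ℕ) : ℕ := if 3 ≤ d then 2 else if 1 ≤ d then 1 else 0

lemma wt_le_two (d : ℕ) : wt d ≤ 2 := by
  unfold wt; split <;> [skip; split] <;> omega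

lemma wt_lip {a b : ℕ} (h : b ≤ a) : wt a ≤ wt b + (a - b) := by
  unfold wt
  split_ifs <;> omega

noncomputable def degA (A : Finset G.V) (v : G.V) : ℕ :=
  ((aliveE A).filter (fun e => v ∈ G.supp e)).card

noncomputable def rhs (A : Finset G.V) : ℕ := ∑ v ∈ A, wt (degA A v)

lemma degA_le_deg (hl : G.Loopless) (A : Finset G.V) (v : G.V) :
    degA A v ≤ G.deg v := by
  rw [deg_eq_card_incident G hl]
  apply Finset.card_le_card
  intro e he
  rw [Finset.mem_filter] at he
  unfold incident
  rw [Finset.mem_filter]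
  exact ⟨Finset.mem_univ _, he.2⟩

lemma degA_mono {A B : Finset G.V} (h : A ⊆ B) (v : G.V) : degA A v ≤ degA B v := by
  apply Finset.card_le_card
  intro e he
  rw [Finset.mem_filter] at he ⊢
  exact ⟨aliveE_mono h he.1, he.2⟩

lemma killed_eq (A : Finset G.V) (v : G.V) :
    aliveE A \ aliveE (A.erase v) = (aliveE A).filter (fun e => v ∈ G.supp e) := by
  ext e
  rw [Finset.mem_sdiff, Finset.mem_filter, mem_aliveE, mem_aliveE]
  constructor
  · rintro ⟨h1, h2⟩
    refine ⟨h1, ?_⟩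
    by_contra hv
    exact h2 (fun u hu => Finset.mem_erase.2 ⟨fun huv => hv (huv ▸ hu), h1 hu⟩)
  · rintro ⟨h1, h2⟩
    exact ⟨h1, fun hsub => (Finset.mem_erase.1 (hsub h2)).1 rfl⟩

lemma price (hl : G.Loopless) {A : Finset G.V} {v : G.V} (hv : v ∈ A) :
    rhs A ≤ rhs (A.erase v) + wt (degA A v) + degA A v := by
  have hsplit : rhs A = wt (degA A v) + ∑ u ∈ A.erase v, wt (degA A u) := by
    unfold rhs
    rw [← Finset.add_sum_erase _ _ hv]
  have hkillsub : aliveE (A.erase v) ⊆ aliveE A := aliveE_mono (Finset.erase_subset v A)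
  set killed := aliveE A \ aliveE (A.erase v) with hk
  -- pointwise: degA A u ≤ degA (A.erase v) u + (killed.filter (u ∈ supp ·)).card
  have hpoint : ∀ u, degA A u ≤ degA (A.erase v) u + (killed.filter (fun e => u ∈ G.supp e)).card := by
    intro u
    unfold degA
    rw [← Finset.card_union_of_disjoint]
    · apply Finset.card_le_card
      intro e he
      rw [Finset.mem_filter] at he
      rw [Finset.mem_union, Finset.mem_filter, Finset.mem_filter]
      by_cases hel : e ∈ aliveE (A.erase v)
      · exact Or.inl ⟨hel, he.2⟩
      · exact Or.inr ⟨Finset.mem_sdiff.2 ⟨he.1, hel⟩, he.2⟩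
    · rw [Finset.disjoint_left]
      intro e he hek
      rw [Finset.mem_filter] at he hek
      have := Finset.mem_sdiff.1 (hk ▸ hek.1)
      exact this.2 he.1
  -- double count
  have hdc : ∑ u ∈ A.erase v, (killed.filter (fun e => u ∈ G.supp e)).card ≤ killed.card := by
    have h1 : ∀ u ∈ A.erase v, (killed.filter (fun e => u ∈ G.supp e)).card
        = ∑ e ∈ killed, (if u ∈ G.supp e then 1 else 0) := by
      intro u _
      rw [Finset.card_filter]
    rw [Finset.sum_congr rfl h1, Finset.sum_comm]
    have h2 : ∀ e ∈ killed, ∑ u ∈ A.erase v, (if u ∈ G.supp e then 1 else 0) ≤ 1 := by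
      intro e he
      have hve : v ∈ G.supp e := by
        rw [hk, killed_eq, Finset.mem_filter] at he
        exact he.2
      obtain ⟨a, b, hab, hsupp⟩ := G.exists_supp hl e
      have : ∑ u ∈ A.erase v, (if u ∈ G.supp e then 1 else 0)
          = ((A.erase v).filter (fun u => u ∈ G.supp e)).card := by
        rw [Finset.card_filter]
      rw [this]
      have hsub2 : (A.erase v).filter (fun u => u ∈ G.supp e) ⊆ (G.supp e).erase v := by
        intro u hu
        rw [Finset.mem_filter, Finset.mem_erase] at hu
        exact Finset.mem_erase.2 ⟨hu.1.1, hu.2⟩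
      calc ((A.erase v).filter (fun u => u ∈ G.supp e)).card
          ≤ ((G.supp e).erase v).card := Finset.card_le_card hsub2
        _ = (G.supp e).card - 1 := Finset.card_erase_of_mem hve
        _ = 1 := by rw [G.supp_card hl]
    calc ∑ e ∈ killed, ∑ u ∈ A.erase v, (if u ∈ G.supp e then 1 else 0)
        ≤ ∑ _e ∈ killed, 1 := Finset.sum_le_sum h2
      _ = killed.card := by simp
  have hkcard : killed.card = degA A v := by
    rw [hk, killed_eq]
    rfl
  have main : ∑ u ∈ A.erase v, wt (degA A u)
      ≤ rhs (A.erase v) + degA A v := by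
    calc ∑ u ∈ A.erase v, wt (degA A u)
        ≤ ∑ u ∈ A.erase v, (wt (degA (A.erase v) u)
            + (degA A u - degA (A.erase v) u)) := by
          apply Finset.sum_le_sum
          intro u _
          exact wt_lip (degA_mono (Finset.erase_subset v A) u)
      _ = rhs (A.erase v) + ∑ u ∈ A.erase v, (degA A u - degA (A.erase v) u) := by
          rw [Finset.sum_add_distrib]; rfl
      _ ≤ rhs (A.erase v) + ∑ u ∈ A.erase v, (killed.filter (fun e => u ∈ G.supp e)).card := by
          apply Nat.add_le_add_left
          apply Finset.sum_le_sum
          intro u _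
          have := hpoint u
          omega
      _ ≤ rhs (A.erase v) + killed.card := Nat.add_le_add_left hdc _
      _ = rhs (A.erase v) + degA A v := by rw [hkcard]
  omega


/-! ### the alternating trail lemma -/

/-- pairwise disjointness of supports -/
def pw (C : Finset G.E) : Prop := ∀ e ∈ C, ∀ f ∈ C, e ≠ f → Disjoint (G.supp e) (G.supp f)

lemma pw_unique {C : Finset G.E} (hC : pw C) {e f : G.E} {v : G.V}
    (he : e ∈ C) (hf : f ∈ C) (hve : v ∈ G.supp e) (hvf : v ∈ G.supp f) : e = f := by
  by_contra h
  exact Finset.disjoint_left.1 (hC e he f hf h) hve hvf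

lemma pw_insert {C : Finset G.E} (hC : pw C) {e : G.E}
    (h : ∀ f ∈ C, Disjoint (G.supp e) (G.supp f)) : pw (insert e C) := by
  intro a ha b hb hab
  rcases Finset.mem_insert.1 ha with ha' | ha' <;>
    rcases Finset.mem_insert.1 hb with hb' | hb'
  · exact absurd (ha'.trans hb'.symm) hab
  · exact ha' ▸ h b hb'
  · exact hb' ▸ (h a ha').symm
  · exact hC a ha' b hb' hab

lemma exists_supp_other (hl : G.Loopless) {e : G.E} {x : G.V} (hx : x ∈ G.supp e) :
    ∃ y, y ≠ x ∧ G.supp e = {x, y} := by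
  obtain ⟨a, b, hab, hs⟩ := G.exists_supp hl e
  rw [hs] at hx
  rcases Finset.mem_insert.1 hx with h | h
  · subst h
    exact ⟨b, fun hbx => hab hbx.symm, by rw [hs]⟩
  · rw [Finset.mem_singleton] at h
    subst h
    exact ⟨a, fun hax => hab hax, by rw [hs, Finset.pair_comm]⟩

lemma trail_aux (hl : G.Loopless) {A : Finset G.V} {M N : Finset G.E}
    (hM : isM A M) (hN : isM A N) (hcard : N.card = M.card)
    {w : G.V} (hwN : w ∉ cover N) :
    ∀ n (S R : Finset G.E) (x : G.V), (M \ S).card = n →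
    S ⊆ M → R ⊆ N → (∀ e ∈ R, e ∉ M) → (∀ e ∈ S, e ∉ N) →
    S.card = R.card + 1 →
    pw ((M \ S) ∪ R) →
    x ∉ cover ((M \ S) ∪ R) → x ∈ cover M → x ≠ w →
    w ∉ cover ((M \ S) ∪ R) →
    cover ((M \ S) ∪ R) ⊆ (cover M).erase w →
    (∀ e ∈ S, ∀ q ∈ G.supp e, q ≠ x → q ∉ cover (N \ R)) →
    ((∃ K, isM A K ∧ K.card = M.card + 1) ∨
     (∃ M' z, isM A M' ∧ M'.card = M.card ∧ w ∉ cover M' ∧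
       ∀ q, q ∉ cover M → q ≠ z → q ∉ cover M')) := by
  intro n
  induction n using Nat.strong_induction_on with
  | _ n IH =>
    intro S R x hn hSM hRN hRM hSN hcards hpwC hxC hxM hxw hwC hcovC hi5
    set C : Finset G.E := (M \ S) ∪ R with hC
    by_cases hxN : x ∈ cover N
    case neg =>
      -- x is N-exposed : build a bigger matching K := (N \ R) ∪ S
      left
      refine ⟨(N \ R) ∪ S, ⟨?_, ?_⟩, ?_⟩
      · intro e he
        rcases Finset.mem_union.1 he with h | h
        · exact hN.1 (Finset.mem_sdiff.1 h).1
        · exact hM.1 (hSM h)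
      · -- pairwise disjoint
        intro e he f hf hef
        rcases Finset.mem_union.1 he with he' | he' <;>
          rcases Finset.mem_union.1 hf with hf' | hf'
        · exact hN.2 e (Finset.mem_sdiff.1 he').1 f (Finset.mem_sdiff.1 hf').1 hef
        · -- e ∈ N \ R, f ∈ S
          rw [Finset.disjoint_left]
          intro q hqe hqf
          have hqx : q ≠ x := by
            intro h
            exact hxN (mem_cover.2 ⟨e, (Finset.mem_sdiff.1 he').1, h ▸ hqe⟩)
          exact hi5 f hf' q hqf hqx (mem_cover.2 ⟨e, he', hqe⟩)
        · rw [disjoint_comm, Finset.disjoint_left]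
          intro q hqf hqe
          have hqx : q ≠ x := by
            intro h
            exact hxN (mem_cover.2 ⟨f, (Finset.mem_sdiff.1 hf').1, h ▸ hqf⟩)
          exact hi5 e he' q hqe hqx (mem_cover.2 ⟨f, hf', hqf⟩)
        · exact hM.2 e (hSM he') f (hSM hf') hef
      · -- cardinality
        have hdisj : Disjoint (N \ R) S := by
          rw [Finset.disjoint_left]
          intro e he hes
          exact hSN e hes (Finset.mem_sdiff.1 he).1
        rw [Finset.card_union_of_disjoint hdisj,
            Finset.card_sdiff_of_subset hRN, hcards]
        have : R.card ≤ N.card := Finset.card_le_card hRN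
        omega
    case pos =>
      obtain ⟨e₂, he₂N, hxe₂⟩ := mem_cover.1 hxN
      obtain ⟨y, hyx, hsupp₂⟩ := exists_supp_other hl hxe₂
      have hye₂ : y ∈ G.supp e₂ := by rw [hsupp₂]; simp
      have he₂C : e₂ ∉ C := fun h => hxC (mem_cover.2 ⟨e₂, h, hxe₂⟩)
      have he₂M : e₂ ∉ M := by
        intro h
        have he₂S : e₂ ∉ S := by
          intro he₂S
          have he₂R : e₂ ∉ R := fun hr => hRM e₂ hr h
          exact hi5 e₂ he₂S y hye₂ hyx
            (mem_cover.2 ⟨e₂, Finset.mem_sdiff.2 ⟨he₂N, he₂R⟩, hye₂⟩)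
        exact he₂C (Finset.mem_union_left _ (Finset.mem_sdiff.2 ⟨h, he₂S⟩))
      have he₂R : e₂ ∉ R := fun hr => he₂C (Finset.mem_union_right _ hr)
      have hwe₂ : w ∉ G.supp e₂ := fun h => hwN (mem_cover.2 ⟨e₂, he₂N, h⟩)
      by_cases hyC : y ∈ cover C
      case neg =>
        -- finish : M' := C ∪ {e₂}
        right
        have hcovs : cover (insert e₂ C) = G.supp e₂ ∪ cover C := by
          unfold cover
          rw [Finset.biUnion_insert]
        refine ⟨insert e₂ C, y, ⟨?_, ?_⟩, ?_, ?_, ?_⟩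
        · intro e he
          rcases Finset.mem_insert.1 he with h | h
          · exact h ▸ hN.1 he₂N
          · rcases Finset.mem_union.1 h with h' | h'
            · exact hM.1 (Finset.mem_sdiff.1 h').1
            · exact hN.1 (hRN h')
        · apply pw_insert hpwC
          intro f hf
          rw [Finset.disjoint_left]
          intro q hqe hqf
          rw [hsupp₂] at hqe
          rcases Finset.mem_insert.1 hqe with h | h
          · exact hxC (mem_cover.2 ⟨f, hf, h ▸ hqf⟩)
          · rw [Finset.mem_singleton] at h
            exact hyC (mem_cover.2 ⟨f, hf, h ▸ hqf⟩)
        · -- cardinality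
          have h1 : Disjoint (M \ S) R := by
            rw [Finset.disjoint_left]
            intro e he her
            exact hRM e her (Finset.mem_sdiff.1 he).1
          have hSMcard : S.card ≤ M.card := Finset.card_le_card hSM
          rw [Finset.card_insert_of_notMem he₂C, hC,
              Finset.card_union_of_disjoint h1, Finset.card_sdiff_of_subset hSM]
          omega
        · -- w not covered
          rw [hcovs, Finset.mem_union]
          rintro (h | h)
          · exact hwe₂ h
          · exact hwC h
        · -- exposure bookkeeping
          intro q hqM hqy
          rw [hcovs, Finset.mem_union]
          rintro (h | h)
          · rw [hsupp₂] at h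
            rcases Finset.mem_insert.1 h with h' | h'
            · exact hqM (h' ▸ hxM)
            · exact hqy (Finset.mem_singleton.1 h')
          · exact hqM (Finset.mem_of_mem_erase (hcovC h))
      case pos =>
        -- step
        obtain ⟨e₃, he₃C, hye₃⟩ := mem_cover.1 hyC
        have he₃₂ : e₃ ≠ e₂ := fun h => he₂C (h ▸ he₃C)
        have he₃MS : e₃ ∈ M \ S := by
          rcases Finset.mem_union.1 he₃C with h | h
          · exact h
          · exfalso
            exact he₃₂ (matching_unique hN (hRN h) he₂N hye₃ hye₂)
        have he₃M : e₃ ∈ M := (Finset.mem_sdiff.1 he₃MS).1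
        have he₃S : e₃ ∉ S := (Finset.mem_sdiff.1 he₃MS).2
        have he₃R : e₃ ∉ R := fun h => he₃₂ (matching_unique hN (hRN h) he₂N hye₃ hye₂)
        have he₃N : e₃ ∉ N := fun h => he₃₂ (matching_unique hN h he₂N hye₃ hye₂)
        obtain ⟨x₃, hx₃y, hsupp₃⟩ := exists_supp_other hl hye₃
        have hx₃e₃ : x₃ ∈ G.supp e₃ := by rw [hsupp₃]; simp
        have hx₃x : x₃ ≠ x := by
          intro h
          exact hxC (mem_cover.2 ⟨e₃, he₃C, h ▸ hx₃e₃⟩)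
        have hx₃w : x₃ ≠ w := by
          intro h
          exact hwC (mem_cover.2 ⟨e₃, he₃C, h ▸ hx₃e₃⟩)
        have hxe₂M : ∀ f ∈ N, x ∈ G.supp f → f = e₂ := fun f hf hxf =>
          matching_unique hN hf he₂N hxf hxe₂
        have hye₂M : ∀ f ∈ N, y ∈ G.supp f → f = e₂ := fun f hf hyf =>
          matching_unique hN hf he₂N hyf hye₂
        -- new sets
        set S' : Finset G.E := insert e₃ S with hS'
        set R' : Finset G.E := insert e₂ R with hR'
        have hCeq : (M \ S') ∪ R' = insert e₂ (C.erase e₃) := by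
          ext e
          simp only [hS', hR', hC, Finset.mem_union, Finset.mem_sdiff,
            Finset.mem_insert, Finset.mem_erase]
          constructor
          · rintro (⟨heM, hes⟩ | h)
            · push_neg at hes
              exact Or.inr ⟨hes.1, Or.inl ⟨heM, hes.2⟩⟩
            · rcases h with h | h
              · exact Or.inl h
              · exact Or.inr ⟨fun hh => he₃R (hh ▸ h), Or.inr h⟩
          · rintro (h | ⟨hne, h⟩)
            · exact Or.inr (Or.inl h)
            · rcases h with ⟨heM, heS⟩ | h
              · exact Or.inl ⟨heM, fun hh => (hh.elim (fun h1 => hne h1) heS)⟩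
              · exact Or.inr (Or.inr h)
        -- verify invariants and recurse
        have hkey : (M \ S').card < (M \ S).card := by
          apply Finset.card_lt_card
          constructor
          · intro e he
            rw [Finset.mem_sdiff] at he ⊢
            exact ⟨he.1, fun h => he.2 (Finset.mem_insert_of_mem h)⟩
          · intro hsub
            have : e₃ ∈ M \ S' := hsub he₃MS
            rw [Finset.mem_sdiff] at this
            exact this.2 (Finset.mem_insert_self _ _)
        rw [hn] at hkey
        refine IH _ hkey S' R' x₃ rfl ?_ ?_ ?_ ?_ ?_ ?_ ?_ ?_ hx₃w ?_ ?_ ?_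
        · -- S' ⊆ M
          intro e he
          rcases Finset.mem_insert.1 he with h | h
          · exact h ▸ he₃M
          · exact hSM h
        · intro e he
          rcases Finset.mem_insert.1 he with h | h
          · exact h ▸ he₂N
          · exact hRN h
        · intro e he
          rcases Finset.mem_insert.1 he with h | h
          · exact h ▸ he₂M
          · exact hRM e h
        · intro e he
          rcases Finset.mem_insert.1 he with h | h
          · exact h ▸ he₃N
          · exact hSN e h
        · rw [hS', hR', Finset.card_insert_of_notMem he₃S,
              Finset.card_insert_of_notMem he₂R, hcards]
        · -- pw C'
          rw [hCeq]
          apply pw_insert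
          · intro a ha b hb hab
            exact hpwC a (Finset.mem_of_mem_erase ha) b (Finset.mem_of_mem_erase hb) hab
          · intro f hf
            rw [Finset.disjoint_left]
            intro q hqe hqf
            have hfC : f ∈ C := Finset.mem_of_mem_erase hf
            rw [hsupp₂] at hqe
            rcases Finset.mem_insert.1 hqe with h | h
            · exact hxC (mem_cover.2 ⟨f, hfC, h ▸ hqf⟩)
            · rw [Finset.mem_singleton] at h
              subst h
              exact (Finset.mem_erase.1 hf).1
                (pw_unique hpwC hfC he₃C hqf hye₃)
        · -- x₃ not covered by C'
          rw [hCeq]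
          intro h
          rcases mem_cover.1 h with ⟨f, hf, hx₃f⟩
          rcases Finset.mem_insert.1 hf with hf' | hf'
          · subst hf'
            rw [hsupp₂] at hx₃f
            rcases Finset.mem_insert.1 hx₃f with h' | h'
            · exact hx₃x h'
            · exact hx₃y (Finset.mem_singleton.1 h')
          · exact (Finset.mem_erase.1 hf').1
              (pw_unique hpwC (Finset.mem_of_mem_erase hf') he₃C hx₃f hx₃e₃)
        · exact mem_cover.2 ⟨e₃, he₃M, hx₃e₃⟩
        · -- w not covered by C'
          rw [hCeq]
          intro h
          rcases mem_cover.1 h with ⟨f, hf, hwf⟩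
          rcases Finset.mem_insert.1 hf with hf' | hf'
          · exact hwe₂ (hf' ▸ hwf)
          · exact hwC (mem_cover.2 ⟨f, Finset.mem_of_mem_erase hf', hwf⟩)
        · -- cover C' ⊆ (cover M).erase w
          rw [hCeq]
          intro q hq
          rcases mem_cover.1 hq with ⟨f, hf, hqf⟩
          rcases Finset.mem_insert.1 hf with hf' | hf'
          · subst hf'
            rw [hsupp₂] at hqf
            rcases Finset.mem_insert.1 hqf with h | h
            · subst h
              exact Finset.mem_erase.2 ⟨hxw, hxM⟩
            · rw [Finset.mem_singleton] at h
              subst h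
              exact hcovC hyC
          · exact hcovC (mem_cover.2 ⟨f, Finset.mem_of_mem_erase hf', hqf⟩)
        · -- i5 for S'
          intro e he q hqe hqx₃
          rcases Finset.mem_insert.1 he with he' | he'
          · subst he'
            rw [hsupp₃] at hqe
            rcases Finset.mem_insert.1 hqe with h | h
            · subst h
              -- q = y
              intro hcov
              rcases mem_cover.1 hcov with ⟨f, hf, hyf⟩
              rw [Finset.mem_sdiff] at hf
              have := hye₂M f hf.1 hyf
              subst this
              exact hf.2 (Finset.mem_insert_self _ _)
            · rw [Finset.mem_singleton] at h
              exact absurd h hqx₃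
          · intro hcov
            rcases mem_cover.1 hcov with ⟨f, hf, hqf⟩
            rw [Finset.mem_sdiff] at hf
            by_cases hqx : q = x
            · subst hqx
              have := hxe₂M f hf.1 hqf
              subst this
              exact hf.2 (Finset.mem_insert_self _ _)
            · exact hi5 e he' q hqe hqx
                (mem_cover.2 ⟨f, Finset.mem_sdiff.2
                  ⟨hf.1, fun h => hf.2 (Finset.mem_insert_of_mem h)⟩, hqf⟩)

lemma trail (hl : G.Loopless) {A : Finset G.V} {M N : Finset G.E}
    (hM : isM A M) (hN : isM A N) (hcard : N.card = M.card)
    {w : G.V} (hwM : w ∈ cover M) (hwN : w ∉ cover N) :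
    (∃ K, isM A K ∧ K.card = M.card + 1) ∨
    (∃ M' z, isM A M' ∧ M'.card = M.card ∧ w ∉ cover M' ∧
      ∀ q, q ∉ cover M → q ≠ z → q ∉ cover M') := by
  obtain ⟨e₁, he₁M, hwe₁⟩ := mem_cover.1 hwM
  obtain ⟨x₁, hx₁w, hsupp₁⟩ := exists_supp_other hl hwe₁
  have hx₁e₁ : x₁ ∈ G.supp e₁ := by rw [hsupp₁]; simp
  have he₁N : e₁ ∉ N := fun h => hwN (mem_cover.2 ⟨e₁, h, hwe₁⟩)
  refine trail_aux hl hM hN hcard hwN (M \ {e₁}).card {e₁} ∅ x₁ rfl ?_ ?_ ?_ ?_ ?_ ?_ ?_ ?_ hx₁w ?_ ?_ ?_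
  · intro e he
    rw [Finset.mem_singleton] at he
    exact he ▸ he₁M
  · exact Finset.empty_subset _
  · intro e he
    exact absurd he (Finset.notMem_empty e)
  · intro e he
    rw [Finset.mem_singleton] at he
    exact he ▸ he₁N
  · simp
  · intro e he f hf hef
    rw [Finset.union_empty, Finset.mem_sdiff] at he hf
    exact hM.2 e he.1 f hf.1 hef
  · rw [Finset.union_empty]
    intro h
    rcases mem_cover.1 h with ⟨f, hf, hx₁f⟩
    rw [Finset.mem_sdiff, Finset.mem_singleton] at hf
    exact hf.2 (matching_unique hM hf.1 he₁M hx₁f hx₁e₁)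
  · exact mem_cover.2 ⟨e₁, he₁M, hx₁e₁⟩
  · rw [Finset.union_empty]
    intro h
    rcases mem_cover.1 h with ⟨f, hf, hwf⟩
    rw [Finset.mem_sdiff, Finset.mem_singleton] at hf
    exact hf.2 (matching_unique hM hf.1 he₁M hwf hwe₁)
  · rw [Finset.union_empty]
    intro q hq
    rcases mem_cover.1 hq with ⟨f, hf, hqf⟩
    rw [Finset.mem_sdiff, Finset.mem_singleton] at hf
    refine Finset.mem_erase.2 ⟨?_, mem_cover.2 ⟨f, hf.1, hqf⟩⟩
    intro hqw
    exact hf.2 (matching_unique hM hf.1 he₁M (hqw ▸ hqf) hwe₁)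
  · intro e he q hqe hqx
    rw [Finset.mem_singleton] at he
    subst he
    rw [hsupp₁] at hqe
    rcases Finset.mem_insert.1 hqe with h | h
    · subst h
      rw [Finset.sdiff_empty]
      exact hwN
    · rw [Finset.mem_singleton] at h
      exact absurd h hqx

/-! ### walks -/

def adjA (A : Finset G.V) (p q : G.V) : Prop :=
  ∃ e ∈ aliveE A, p ∈ G.supp e ∧ q ∈ G.supp e

def Wk (A : Finset G.V) : ℕ → G.V → G.V → Prop
  | 0, p, q => p = q
  | n+1, p, q => ∃ r, adjA A p r ∧ Wk A n r q

lemma Wk_refl (A : Finset G.V) (p : G.V) : Wk A 0 p p := rfl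

lemma Wk_concat {A : Finset G.V} :
    ∀ {m n : ℕ} {p q r : G.V}, Wk A m p q → Wk A n q r → Wk A (m + n) p r := by
  intro m
  induction m with
  | zero => intro n p q r h1 h2; rw [show (0 + n) = n by omega]; exact h1 ▸ h2
  | succ k ih =>
    intro n p q r h1 h2
    obtain ⟨s, hs, hw⟩ := h1
    have heq : k + 1 + n = (k + n) + 1 := by omega
    rw [heq]
    exact ⟨s, hs, ih hw h2⟩

lemma adjA_symm {A : Finset G.V} {p q : G.V} (h : adjA A p q) : adjA A q p := by
  obtain ⟨e, he, h1, h2⟩ := h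
  exact ⟨e, he, h2, h1⟩

lemma Wk_symm {A : Finset G.V} :
    ∀ {n : ℕ} {p q : G.V}, Wk A n p q → Wk A n q p := by
  intro n
  induction n with
  | zero => intro p q h; exact h.symm
  | succ k ih =>
    intro p q h
    obtain ⟨r, hr, hw⟩ := h
    have h1 : Wk A k q r := ih hw
    have h2 : Wk A 1 r p := ⟨p, adjA_symm hr, rfl⟩
    exact Wk_concat h1 h2

lemma mem_of_adjA {A : Finset G.V} {p q : G.V} (h : adjA A p q) : q ∈ A := by
  obtain ⟨e, he, _, h2⟩ := h
  exact mem_aliveE.1 he h2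

/-- pair support -/
lemma supp_eq_pair (hl : G.Loopless) {e : G.E} {u v : G.V}
    (hu : u ∈ G.supp e) (hv : v ∈ G.supp e) (huv : u ≠ v) : G.supp e = {u, v} := by
  have hsub : ({u, v} : Finset G.V) ⊆ G.supp e := by
    intro q hq
    rcases Finset.mem_insert.1 hq with h | h
    · exact h ▸ hu
    · exact (Finset.mem_singleton.1 h) ▸ hv
  symm
  apply Finset.eq_of_subset_of_card_le hsub
  rw [G.supp_card hl, Finset.card_pair huv]

/-- two exposed vertices give a bigger matching through an alive edge joining them -/
lemma insert_edge (hl : G.Loopless) {A : Finset G.V} {M : Finset G.E} (hM : isM A M)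
    {e : G.E} (he : e ∈ aliveE A) {u v : G.V} (hu : u ∈ G.supp e) (hv : v ∈ G.supp e)
    (huv : u ≠ v) (huM : u ∉ cover M) (hvM : v ∉ cover M) :
    isM A (insert e M) ∧ (insert e M).card = M.card + 1 := by
  have hsupp : G.supp e = {u, v} := supp_eq_pair hl hu hv huv
  have heM : e ∉ M := by
    intro h
    exact huM (mem_cover.2 ⟨e, h, hu⟩)
  constructor
  · constructor
    · intro f hf
      rcases Finset.mem_insert.1 hf with h | h
      · exact h ▸ he
      · exact hM.1 h
    · apply pw_insert hM.2
      intro f hf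
      rw [Finset.disjoint_left]
      intro q hqe hqf
      rw [hsupp] at hqe
      rcases Finset.mem_insert.1 hqe with h | h
      · exact huM (mem_cover.2 ⟨f, hf, h ▸ hqf⟩)
      · exact hvM (mem_cover.2 ⟨f, hf, (Finset.mem_singleton.1 h) ▸ hqf⟩)
  · exact Finset.card_insert_of_notMem heM

/-! ### Gallai-type lemma : a connected all-inessential alive set has deficiency at most 1 -/

lemma deficiency_le_one (hl : G.Loopless) {A : Finset G.V}
    (hconn : ∀ p ∈ A, ∀ q ∈ A, ∃ n, Wk A n p q)
    (hiness : ∀ v ∈ A, nuA (A.erase v) = nuA A) :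
    A.card ≤ 2 * nuA A + 1 := by
  classical
  by_contra hcon
  push_neg at hcon
  obtain ⟨M, hM, hMcard⟩ := nuA_spec A
  -- two exposed vertices
  have hexp : 1 < (A \ cover M).card := by
    have h1 : cover M ⊆ A := cover_subset hM
    have h2 : (A \ cover M).card = A.card - (cover M).card := Finset.card_sdiff_of_subset h1
    rw [card_cover hl hM, hMcard] at h2
    omega
  obtain ⟨u, hu, v, hv, huv⟩ := Finset.one_lt_card.1 hexp
  rw [Finset.mem_sdiff] at hu hv
  -- minimal walk length between exposed vertices of maximum matchings
  set P : ℕ → Prop := fun n => ∃ (M : Finset G.E) (u v : G.V),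
    isM A M ∧ M.card = nuA A ∧ u ∈ A ∧ v ∈ A ∧ u ∉ cover M ∧ v ∉ cover M ∧
    u ≠ v ∧ Wk A n u v with hP
  have hPex : ∃ n, P n := by
    obtain ⟨n, hw⟩ := hconn u hu.1 v hv.1
    exact ⟨n, M, u, v, hM, hMcard, hu.1, hv.1, hu.2, hv.2, huv, hw⟩
  set d := Nat.find hPex with hd
  obtain ⟨M₀, u₀, v₀, hM₀, hM₀c, hu₀A, hv₀A, hu₀M, hv₀M, huv₀, hwalk⟩ := Nat.find_spec hPex
  rw [← hd] at hwalk
  have hminP : ∀ m, m < d → ¬ P m := fun m hm => Nat.find_min hPex hm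
  -- d ≥ 2
  have hd0 : d ≠ 0 := by
    intro h
    rw [h] at hwalk
    exact huv₀ hwalk
  have hd1 : d ≠ 1 := by
    intro h
    rw [h] at hwalk
    obtain ⟨r, hr, hrv⟩ := hwalk
    obtain ⟨e, he, h1, h2⟩ := hr
    rw [hrv] at h2
    obtain ⟨hiM, hic⟩ := insert_edge hl hM₀ he h1 h2 huv₀ hu₀M hv₀M
    have := le_nuA hiM
    rw [hic, hM₀c] at this
    omega
  have hd2 : 2 ≤ d := by omega
  -- extract w
  obtain ⟨d', hd'⟩ : ∃ d', d = d' + 1 := ⟨d - 1, by omega⟩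
  rw [hd'] at hwalk
  obtain ⟨w, huw, hwv⟩ := hwalk
  have hwA : w ∈ A := mem_of_adjA huw
  have hP1 : ∀ (M' : Finset G.E), isM A M' → M'.card = nuA A →
      u₀ ∉ cover M' → w ∉ cover M' → u₀ ≠ w → False := by
    intro M' h1 h2 h3 h4 h5
    have : P 1 := ⟨M', u₀, w, h1, h2, hu₀A, hwA, h3, h4, h5, ⟨w, huw, rfl⟩⟩
    exact hminP 1 (by omega) this
  have hPd' : ∀ (M' : Finset G.E), isM A M' → M'.card = nuA A →
      w ∉ cover M' → v₀ ∉ cover M' → w ≠ v₀ → False := by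
    intro M' h1 h2 h3 h4 h5
    have : P d' := ⟨M', w, v₀, h1, h2, hwA, hv₀A, h3, h4, h5, hwv⟩
    exact hminP d' (by omega) this
  -- w ≠ u₀ and w ≠ v₀
  have hwu : w ≠ u₀ := by
    intro h
    subst h
    exact hminP d' (by omega) ⟨M₀, w, v₀, hM₀, hM₀c, hwA, hv₀A, hu₀M, hv₀M, huv₀, hwv⟩
  have hwv₀ : w ≠ v₀ := by
    intro h
    subst h
    exact hP1 M₀ hM₀ hM₀c hu₀M hv₀M (fun hh => huv₀ hh)
  -- w must be covered by M₀
  have hwM₀ : w ∈ cover M₀ := by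
    by_contra h
    exact hP1 M₀ hM₀ hM₀c hu₀M h (fun hh => hwu hh.symm)
  -- the inessential witness
  obtain ⟨N, hN, hNc⟩ := nuA_spec (A.erase w)
  have hNA : isM A N := isM_mono (Finset.erase_subset w A) hN
  have hNcard : N.card = nuA A := by rw [hNc, hiness w hwA]
  have hwN : w ∉ cover N := by
    intro h
    exact (Finset.mem_erase.1 (cover_subset hN h)).1 rfl
  by_cases hu₀N : u₀ ∉ cover N
  · exact hP1 N hNA hNcard hu₀N hwN (fun h => hwu h.symm)
  by_cases hv₀N : v₀ ∉ cover N
  · exact hPd' N hNA hNcard hwN hv₀N hwv₀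
  push_neg at hu₀N hv₀N
  -- apply the trail lemma
  rcases trail hl hM₀ hNA (by rw [hNcard, hM₀c]) hwM₀ hwN with
    ⟨K, hK, hKc⟩ | ⟨M', z, hM', hM'c, hwM', hM'exp⟩
  · have := le_nuA hK
    rw [hKc, hM₀c] at this
    omega
  · by_cases huz : u₀ = z
    · have hv₀M' : v₀ ∉ cover M' := hM'exp v₀ hv₀M (fun h => huv₀ (huz ▸ h).symm)
      exact hPd' M' hM' (by rw [hM'c, hM₀c]) hwM' hv₀M' hwv₀
    · have hu₀M' : u₀ ∉ cover M' := hM'exp u₀ hu₀M huz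
      exact hP1 M' hM' (by rw [hM'c, hM₀c]) hu₀M' hwM' (fun h => hwu h.symm)


/-! ### handshake -/

lemma handshake (hl : G.Loopless) (A : Finset G.V) :
    ∑ v ∈ A, degA A v = 2 * (aliveE A).card := by
  unfold degA
  have h1 : ∀ v ∈ A, ((aliveE A).filter (fun e => v ∈ G.supp e)).card
      = ∑ e ∈ aliveE A, (if v ∈ G.supp e then 1 else 0) := fun v _ => Finset.card_filter _ _
  rw [Finset.sum_congr rfl h1, Finset.sum_comm]
  have h2 : ∀ e ∈ aliveE A, ∑ v ∈ A, (if v ∈ G.supp e then 1 else 0) = 2 := by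
    intro e he
    have : ∑ v ∈ A, (if v ∈ G.supp e then 1 else 0) = (A.filter (fun v => v ∈ G.supp e)).card :=
      (Finset.card_filter _ _).symm
    rw [this]
    have hsub : A.filter (fun v => v ∈ G.supp e) = G.supp e := by
      apply Finset.Subset.antisymm
      · intro q hq
        exact (Finset.mem_filter.1 hq).2
      · intro q hq
        exact Finset.mem_filter.2 ⟨mem_aliveE.1 he hq, hq⟩
    rw [hsub, G.supp_card hl]
  rw [Finset.sum_congr rfl h2, Finset.sum_const, smul_eq_mul, mul_comm]

/-! ### separations -/

def Sep (B C : Finset G.V) : Prop :=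
  Disjoint B C ∧ ∀ e ∈ aliveE (B ∪ C), G.supp e ⊆ B ∨ G.supp e ⊆ C

lemma Sep.mono {B C B' C' : Finset G.V} (h : Sep B C) (hB : B' ⊆ B) (hC : C' ⊆ C) :
    Sep B' C' := by
  refine ⟨h.1.mono hB hC, ?_⟩
  intro e he
  have he' : e ∈ aliveE (B ∪ C) :=
    aliveE_mono (Finset.union_subset_union hB hC) he
  have hsub : G.supp e ⊆ B' ∪ C' := mem_aliveE.1 he
  rcases h.2 e he' with hh | hh
  · left
    intro q hq
    rcases Finset.mem_union.1 (hsub hq) with h' | h'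
    · exact h'
    · exact absurd (hh hq) (Finset.disjoint_right.1 h.1 (hC h'))
  · right
    intro q hq
    rcases Finset.mem_union.1 (hsub hq) with h' | h'
    · exact absurd (hh hq) (Finset.disjoint_left.1 h.1 (hB h'))
    · exact h'

lemma supp_nonempty (hl : G.Loopless) (e : G.E) : (G.supp e).Nonempty := by
  rw [← Finset.card_pos, G.supp_card hl]
  omega

lemma nuA_sep (hl : G.Loopless) {B C : Finset G.V} (h : Sep B C) :
    nuA (B ∪ C) = nuA B + nuA C := by
  classical
  apply le_antisymm
  · obtain ⟨M, hM, hMc⟩ := nuA_spec (B ∪ C)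
    set MB := M.filter (fun e => G.supp e ⊆ B) with hMB
    set MC := M.filter (fun e => ¬ G.supp e ⊆ B) with hMC
    have h1 : isM B MB := by
      constructor
      · intro e he
        rw [hMB, Finset.mem_filter] at he
        exact mem_aliveE.2 he.2
      · intro e he f hf hef
        rw [hMB, Finset.mem_filter] at he hf
        exact hM.2 e he.1 f hf.1 hef
    have h2 : isM C MC := by
      constructor
      · intro e he
        rw [hMC, Finset.mem_filter] at he
        rcases h.2 e (hM.1 he.1) with hh | hh
        · exact absurd hh he.2
        · exact mem_aliveE.2 hh
      · intro e he f hf hef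
        rw [hMC, Finset.mem_filter] at he hf
        exact hM.2 e he.1 f hf.1 hef
    calc nuA (B ∪ C) = M.card := hMc.symm
      _ = MB.card + MC.card := (Finset.card_filter_add_card_filter_not _).symm
      _ ≤ nuA B + nuA C := Nat.add_le_add (le_nuA h1) (le_nuA h2)
  · obtain ⟨M₁, hM₁, hc₁⟩ := nuA_spec B
    obtain ⟨M₂, hM₂, hc₂⟩ := nuA_spec C
    have hdisj : Disjoint M₁ M₂ := by
      rw [Finset.disjoint_left]
      intro e he₁ he₂
      obtain ⟨q, hq⟩ := supp_nonempty hl e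
      exact Finset.disjoint_left.1 h.1
        (mem_aliveE.1 (hM₁.1 he₁) hq) (mem_aliveE.1 (hM₂.1 he₂) hq)
    have hisM : isM (B ∪ C) (M₁ ∪ M₂) := by
      constructor
      · intro e he
        rcases Finset.mem_union.1 he with h' | h'
        · exact aliveE_mono Finset.subset_union_left (hM₁.1 h')
        · exact aliveE_mono Finset.subset_union_right (hM₂.1 h')
      · intro e he f hf hef
        rcases Finset.mem_union.1 he with he' | he' <;>
          rcases Finset.mem_union.1 hf with hf' | hf'
        · exact hM₁.2 e he' f hf' hef
        · exact (h.1.mono (mem_aliveE.1 (hM₁.1 he')) (mem_aliveE.1 (hM₂.1 hf')))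
        · exact (h.1.mono (mem_aliveE.1 (hM₁.1 hf')) (mem_aliveE.1 (hM₂.1 he'))).symm
        · exact hM₂.2 e he' f hf' hef
    have := le_nuA hisM
    rw [Finset.card_union_of_disjoint hdisj, hc₁, hc₂] at this
    exact this

lemma degA_sep_left (hl : G.Loopless) {B C : Finset G.V} (h : Sep B C) {v : G.V}
    (hv : v ∈ B) : degA (B ∪ C) v = degA B v := by
  unfold degA
  congr 1
  apply Finset.Subset.antisymm
  · intro e he
    rw [Finset.mem_filter] at he ⊢
    refine ⟨?_, he.2⟩
    rcases h.2 e he.1 with hh | hh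
    · exact mem_aliveE.2 hh
    · exact absurd (hh he.2) (Finset.disjoint_left.1 h.1 hv)
  · intro e he
    rw [Finset.mem_filter] at he ⊢
    exact ⟨aliveE_mono Finset.subset_union_left he.1, he.2⟩

lemma rhs_sep (hl : G.Loopless) {B C : Finset G.V} (h : Sep B C) :
    rhs (B ∪ C) = rhs B + rhs C := by
  unfold rhs
  rw [Finset.sum_union h.1]
  congr 1
  · apply Finset.sum_congr rfl
    intro v hv
    rw [degA_sep_left hl h hv]
  · apply Finset.sum_congr rfl
    intro v hv
    have h' : Sep C B := ⟨h.1.symm, fun e he => (h.2 e (by rwa [Finset.union_comm])).symm⟩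
    rw [Finset.union_comm] at *
    rw [degA_sep_left hl h' hv]

/-! ### base case : all-inessential sets -/

lemma base_case (hl : G.Loopless) (hcubic : ∀ v : G.V, G.deg v = 3) :
    ∀ (k : ℕ) (A : Finset G.V), A.card = k →
    (∀ v ∈ A, nuA (A.erase v) = nuA A) → rhs A ≤ 5 * nuA A := by
  classical
  intro k
  induction k using Nat.strong_induction_on with
  | _ k IH =>
    intro A hk hiness
    rcases Finset.eq_empty_or_nonempty A with hA | ⟨v₀, hv₀⟩
    · subst hA
      unfold rhs
      simp
    · set C : Finset G.V := A.filter (fun q => ∃ n, Wk A n v₀ q) with hCdef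
      have hCA : C ⊆ A := Finset.filter_subset _ _
      have hv₀C : v₀ ∈ C := Finset.mem_filter.2 ⟨hv₀, 0, rfl⟩
      have hunion : C ∪ (A \ C) = A := Finset.union_sdiff_of_subset hCA
      have hSep : Sep C (A \ C) := by
        refine ⟨Finset.disjoint_sdiff, ?_⟩
        intro e he
        rw [hunion] at he
        by_cases hint : ∃ q ∈ G.supp e, q ∈ C
        · left
          obtain ⟨q, hq, hqC⟩ := hint
          obtain ⟨n, hwq⟩ := (Finset.mem_filter.1 hqC).2
          intro p hp
          refine Finset.mem_filter.2 ⟨mem_aliveE.1 he hp, n + 1, ?_⟩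
          exact Wk_concat hwq ⟨p, ⟨e, he, hq, hp⟩, rfl⟩
        · right
          push_neg at hint
          intro p hp
          exact Finset.mem_sdiff.2 ⟨mem_aliveE.1 he hp, hint p hp⟩
      by_cases hCeq : C = A
      · -- connected case
        have hconn : ∀ p ∈ A, ∀ q ∈ A, ∃ n, Wk A n p q := by
          intro p hp q hq
          rw [← hCeq] at hp hq
          obtain ⟨m, hm⟩ := (Finset.mem_filter.1 hp).2
          obtain ⟨n, hn⟩ := (Finset.mem_filter.1 hq).2
          exact ⟨m + n, Wk_concat (Wk_symm hm) hn⟩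
        have hdef : A.card ≤ 2 * nuA A + 1 := deficiency_le_one hl hconn hiness
        have h2nu : 2 * nuA A ≤ A.card := two_nuA_le hl A
        by_cases hd0 : ∃ v ∈ A, degA A v = 0
        · obtain ⟨v, hvA, hdv⟩ := hd0
          have hAv : A = {v} := by
            apply Finset.eq_singleton_iff_unique_mem.2
            refine ⟨hvA, ?_⟩
            intro q hq
            obtain ⟨n, hw⟩ := hconn q hq v hvA
            have hw' := Wk_symm hw
            cases n with
            | zero => exact hw'.symm
            | succ m =>
              exfalso
              obtain ⟨r, hr, _⟩ := hw'
              obtain ⟨e, he, h1, _⟩ := hr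
              have : e ∈ (aliveE A).filter (fun e => v ∈ G.supp e) :=
                Finset.mem_filter.2 ⟨he, h1⟩
              unfold degA at hdv
              rw [Finset.card_eq_zero] at hdv
              rw [hdv] at this
              exact Finset.notMem_empty e this
          have : rhs A = 0 := by
            unfold rhs
            rw [hAv, Finset.sum_singleton, ← hAv, hdv]
            rfl
          omega
        · push_neg at hd0
          have hwt1 : ∀ v ∈ A, 1 ≤ wt (degA A v) := by
            intro v hv
            have := hd0 v hv
            unfold wt
            split_ifs <;> omega
          have hwt2 : ∀ v ∈ A, wt (degA A v) ≤ 2 := fun v _ => wt_le_two _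
          by_cases hpar : A.card = 2 * nuA A
          · -- perfectly matched
            have : rhs A ≤ 2 * A.card := by
              unfold rhs
              calc ∑ v ∈ A, wt (degA A v) ≤ ∑ _v ∈ A, 2 := Finset.sum_le_sum hwt2
                _ = 2 * A.card := by rw [Finset.sum_const, smul_eq_mul, mul_comm]
            omega
          · -- A.card = 2ν + 1
            have hodd : A.card = 2 * nuA A + 1 := by omega
            -- claim : ∑ (5 - 2 wt) ≥ 5
            have hkey : 2 * rhs A + 5 ≤ 5 * A.card := by
              by_cases h5 : 5 ≤ A.card
              · have : rhs A ≤ 2 * A.card := by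
                  unfold rhs
                  calc ∑ v ∈ A, wt (degA A v) ≤ ∑ _v ∈ A, 2 := Finset.sum_le_sum hwt2
                    _ = 2 * A.card := by rw [Finset.sum_const, smul_eq_mul, mul_comm]
                omega
              · -- A.card ∈ {1, 3}
                push_neg at h5
                have hcard1 : A.card ≠ 1 := by
                  intro h1
                  obtain ⟨v, hv⟩ := Finset.card_eq_one.1 h1
                  have hvA : v ∈ A := by rw [hv]; exact Finset.mem_singleton_self v
                  have := hd0 v hvA
                  have hne : ((aliveE A).filter (fun e => v ∈ G.supp e)).Nonempty := by
                    rw [← Finset.card_pos]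
                    unfold degA at this
                    omega
                  obtain ⟨e, he⟩ := hne
                  rw [Finset.mem_filter] at he
                  have h2 : (G.supp e).card ≤ A.card :=
                    Finset.card_le_card (mem_aliveE.1 he.1)
                  rw [G.supp_card hl, h1] at h2
                  omega
                have hcard3 : A.card = 3 := by omega
                -- some vertex has degree ≤ 2
                have hlow : ∃ v ∈ A, wt (degA A v) ≤ 1 := by
                  by_contra hall
                  push_neg at hall
                  have hall3 : ∀ v ∈ A, degA A v = 3 := by
                    intro v hv
                    have h1 := hall v hv
                    have h2 : degA A v ≤ 3 := by
                      have := degA_le_deg hl A v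
                      rw [hcubic v] at this
                      exact this
                    unfold wt at h1
                    split_ifs at h1 <;> omega
                  have hsum := handshake hl A
                  rw [Finset.sum_congr rfl hall3, Finset.sum_const, smul_eq_mul, hcard3] at hsum
                  omega
                obtain ⟨v, hvA, hvwt⟩ := hlow
                have hsum : rhs A = wt (degA A v) + ∑ u ∈ A.erase v, wt (degA A u) := by
                  unfold rhs
                  rw [← Finset.add_sum_erase _ _ hvA]
                have hrest : ∑ u ∈ A.erase v, wt (degA A u) ≤ 2 * (A.card - 1) := by
                  calc ∑ u ∈ A.erase v, wt (degA A u) ≤ ∑ _u ∈ A.erase v, 2 :=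
                      Finset.sum_le_sum (fun u hu => wt_le_two _)
                    _ = 2 * (A.card - 1) := by
                      rw [Finset.sum_const, smul_eq_mul, mul_comm,
                          Finset.card_erase_of_mem hvA]
                rw [hcard3] at *
                omega
            omega
      · -- split case
        set D : Finset G.V := A \ C with hD
        have hCssA : C ⊂ A := Finset.ssubset_iff_subset_ne.2 ⟨hCA, hCeq⟩
        have hCcard : C.card < k := hk ▸ Finset.card_lt_card hCssA
        have hDcard : D.card < k := by
          rw [← hk]
          apply Finset.card_lt_card
          rw [Finset.ssubset_iff_subset_ne]
          refine ⟨Finset.sdiff_subset, ?_⟩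
          intro h
          have : v₀ ∈ D := h ▸ hv₀
          exact (Finset.mem_sdiff.1 this).2 hv₀C
        have hnusplit : nuA A = nuA C + nuA D := by
          rw [← hunion]
          exact nuA_sep hl hSep
        have hrhssplit : rhs A = rhs C + rhs D := by
          rw [← hunion]
          exact rhs_sep hl hSep
        have hinessC : ∀ v ∈ C, nuA (C.erase v) = nuA C := by
          intro v hv
          have hvA : v ∈ A := hCA hv
          have h1 : A.erase v = (C.erase v) ∪ D := by
            ext q
            rw [Finset.mem_erase, Finset.mem_union, Finset.mem_erase, hD, Finset.mem_sdiff]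
            constructor
            · rintro ⟨hq1, hq2⟩
              rw [← hunion, Finset.mem_union] at hq2
              rcases hq2 with h' | h'
              · exact Or.inl ⟨hq1, h'⟩
              · exact Or.inr (Finset.mem_sdiff.1 h')
            · rintro (⟨hq1, hq2⟩ | ⟨hq1, hq2⟩)
              · exact ⟨hq1, hCA hq2⟩
              · exact ⟨fun h => hq2 (h ▸ hv), hq1⟩
          have hsep' : Sep (C.erase v) D := Sep.mono hSep (Finset.erase_subset v C) (le_refl _)
          have h2 := hiness v hvA
          rw [h1, nuA_sep hl hsep', hnusplit] at h2
          omega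
        have hinessD : ∀ v ∈ D, nuA (D.erase v) = nuA D := by
          intro v hv
          have hvA : v ∈ A := (Finset.mem_sdiff.1 hv).1
          have h1 : A.erase v = C ∪ (D.erase v) := by
            ext q
            rw [Finset.mem_erase, Finset.mem_union, Finset.mem_erase, hD, Finset.mem_sdiff]
            constructor
            · rintro ⟨hq1, hq2⟩
              rw [← hunion, Finset.mem_union] at hq2
              rcases hq2 with h' | h'
              · exact Or.inl h'
              · exact Or.inr ⟨hq1, Finset.mem_sdiff.1 h'⟩
            · rintro (hq | ⟨hq1, hq2⟩)
              · refine ⟨?_, hCA hq⟩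
                intro h
                exact (Finset.mem_sdiff.1 hv).2 (h ▸ hq)
              · exact ⟨hq1, hq2.1⟩
          have hsep' : Sep C (D.erase v) := Sep.mono hSep (le_refl _) (Finset.erase_subset v D)
          have h2 := hiness v hvA
          rw [h1, nuA_sep hl hsep', hnusplit] at h2
          omega
        have hC5 := IH C.card hCcard C rfl hinessC
        have hD5 := IH D.card hDcard D rfl hinessD
        omega

/-! ### main induction -/

lemma main_ineq (hl : G.Loopless) (hcubic : ∀ v : G.V, G.deg v = 3) :
    ∀ (k : ℕ) (A : Finset G.V), A.card = k → rhs A ≤ 5 * nuA A := by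
  intro k
  induction k using Nat.strong_induction_on with
  | _ k IH =>
    intro A hk
    by_cases hin : ∀ v ∈ A, nuA (A.erase v) = nuA A
    · exact base_case hl hcubic k A hk hin
    · push_neg at hin
      obtain ⟨v, hvA, hne⟩ := hin
      have h1 : nuA (A.erase v) ≤ nuA A := nuA_erase_le A v
      have h2 : nuA A ≤ nuA (A.erase v) + 1 := nuA_le_erase A v
      have h3 : nuA A = nuA (A.erase v) + 1 := by omega
      have hcard : (A.erase v).card < k := hk ▸ Finset.card_lt_card
        (Finset.erase_ssubset hvA)
      have hIH := IH (A.erase v).card hcard (A.erase v) rfl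
      have hprice := price hl hvA
      have hw2 : wt (degA A v) ≤ 2 := wt_le_two _
      have hd3 : degA A v ≤ 3 := by
        have := degA_le_deg hl A v
        rw [hcubic v] at this
        exact this
      omega

/-! ### conclusion -/

lemma isMatching_iff_isM (hl : G.Loopless) (M : Finset G.E) :
    G.IsMatching M ↔ isM (Finset.univ : Finset G.V) M := by
  constructor
  · rintro ⟨_, h2⟩
    constructor
    · intro e _
      exact mem_aliveE.2 (Finset.subset_univ _)
    · intro e he f hf hef
      rw [Finset.disjoint_left]
      intro q hqe hqf
      exact h2 e he f hf hef q (G.mem_supp.1 hqe) (G.mem_supp.1 hqf)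
  · rintro ⟨_, h2⟩
    refine ⟨fun e _ => hl e, ?_⟩
    intro e he f hf hef v hve hvf
    exact Finset.disjoint_left.1 (h2 e he f hf hef)
      (G.mem_supp.2 hve) (G.mem_supp.2 hvf)



end NuOneProof

/-- Every cubic graph G satisfies ν₁(G) ≥ (2/5)·|V(G)|. -/
theorem cubic_nu1_ge
    (G : Multigraph) (hloopless : G.Loopless) (hcubic : ∀ v : G.V, G.deg v = 3) :
    5 * G.nu1 ≥ 2 * Fintype.card G.V := by
  have h1 : G.nu1 = nuA (Finset.univ : Finset G.V) := by
    unfold nu1 nuA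
    congr 1
    ext m
    constructor
    · rintro ⟨M, hM, hc⟩
      exact ⟨M, (isMatching_iff_isM hloopless M).1 hM, hc⟩
    · rintro ⟨M, hM, hc⟩
      exact ⟨M, (isMatching_iff_isM hloopless M).2 hM, hc⟩
  have halive : aliveE (Finset.univ : Finset G.V) = (Finset.univ : Finset G.E) := by
    apply Finset.eq_univ_iff_forall.2
    intro e
    exact mem_aliveE.2 (Finset.subset_univ _)
  have hdeg : ∀ v : G.V, degA (Finset.univ : Finset G.V) v = 3 := by
    intro v
    unfold degA
    rw [halive]
    have : (Finset.univ.filter (fun e => v ∈ G.supp e)).card = (G.incident v).card := rfl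
    rw [this, ← deg_eq_card_incident G hloopless, hcubic v]
  have hrhs : rhs (Finset.univ : Finset G.V) = 2 * Fintype.card G.V := by
    unfold rhs
    rw [Finset.sum_congr rfl (fun v _ => by rw [hdeg v])]
    have : wt 3 = 2 := rfl
    rw [this, Finset.sum_const, smul_eq_mul, mul_comm, Finset.card_univ]
  have hmain := main_ineq hloopless hcubic (Finset.univ : Finset G.V).card
    (Finset.univ : Finset G.V) rfl
  rw [hrhs] at hmain
  rw [h1]
  omega


end Multigraph
end
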